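/- arXiv:2212.04203 — 7 statements merged into one kernel-verified Lean document; each statement's English description precedes it below -/
import Mathlib

section
/- Let f : [0,∞) → [-∞,∞) be increasing and differentiable on (0,∞). If for every positive integer k the function x ↦ f((k+1)x) − f(kx) is constant on (0,∞), then there exist constants a > 0 and b ∈ ℝ such that f(x) = a·ln x + b for all x > 0. -/
/-- A completely additive, monotone arithmetic function is proportional to `log`. -/
lemma addlog_aux (C : ℕ → ℝ)
    (hadd : ∀ m n : ℕ, 1 ≤ m → 1 ≤ n → C (m * n) = C m + C n)
    (hmono : ∀ m n : ℕ, 1 ≤ m → m ≤ n → C m ≤ C n)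
    (hC2 : 0 < C 2) :
    ∀ n : ℕ, 1 ≤ n → C n * Real.log 2 = C 2 * Real.log n := by
  have hC1 : C 1 = 0 := by have := hadd 1 1 le_rfl le_rfl; simpa using by linarith [this]
  have hpow : ∀ n t : ℕ, 1 ≤ n → C (n ^ t) = (t : ℝ) * C n := by
    intro n t hn
    induction t with
    | zero => simpa using hC1
    | succ t ih =>
        have h1 : 1 ≤ n ^ t := Nat.one_le_pow _ _ hn
        rw [pow_succ, hadd _ _ h1 hn, ih]
        push_cast; ring
  have hCnonneg : ∀ n : ℕ, 1 ≤ n → 0 ≤ C n := by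
    intro n hn; have := hmono 1 n le_rfl hn; linarith [hC1]
  have hpowle : ∀ m n s t : ℕ, 1 ≤ m → 1 ≤ n → m ^ s ≤ n ^ t →
      (s : ℝ) * C m ≤ (t : ℝ) * C n := by
    intro m n s t hm hn h
    have := hmono (m ^ s) (n ^ t) (Nat.one_le_pow _ _ hm) h
    rwa [hpow _ _ hm, hpow _ _ hn] at this
  have hlog2 : (0 : ℝ) < Real.log 2 := Real.log_pos (by norm_num)
  intro n hn
  rcases eq_or_lt_of_le hn with h1 | h2
  · rw [← h1]; simp [hC1]
  · have hn2 : 2 ≤ n := h2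
    have hlogn : (0 : ℝ) < Real.log n := Real.log_pos (by exact_mod_cast h2)
    have hn2R : (1 : ℝ) < (n : ℝ) := by exact_mod_cast h2
    have hCn : 0 ≤ C n := hCnonneg n hn
    -- key bridge: real power comparison from log comparison
    have keylt : ∀ s t : ℕ, (s : ℝ) * Real.log 2 < (t : ℝ) * Real.log n →
        (2 : ℕ) ^ s ≤ n ^ t := by
      intro s t h
      rw [← Real.log_pow, ← Real.log_pow] at h
      have := (Real.log_lt_log_iff (by positivity) (by positivity : (0:ℝ) < (n:ℝ) ^ t)).mp h
      exact_mod_cast this.le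
    have keylt' : ∀ s t : ℕ, (t : ℝ) * Real.log n < (s : ℝ) * Real.log 2 →
        n ^ t ≤ 2 ^ s := by
      intro s t h
      rw [← Real.log_pow, ← Real.log_pow] at h
      have := (Real.log_lt_log_iff (by positivity : (0:ℝ) < (n:ℝ) ^ t) (by positivity)).mp h
      exact_mod_cast this.le
    rcases lt_trichotomy (C n * Real.log 2) (C 2 * Real.log n) with hlt | heq | hgt
    · exfalso
      have h1 : C n / C 2 < Real.log n / Real.log 2 := by
        rw [div_lt_div_iff₀ hC2 hlog2]; nlinarith
      obtain ⟨q, hq1, hq2⟩ := exists_rat_btwn h1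
      have hq0 : 0 < q := by
        have h0 : (0 : ℝ) ≤ C n / C 2 := div_nonneg hCn hC2.le
        have : (0 : ℝ) < (q : ℝ) := lt_of_le_of_lt h0 hq1
        exact_mod_cast this
      have hnum : (0 : ℤ) < q.num := Rat.num_pos.mpr hq0
      have hden : (0 : ℕ) < q.den := q.pos
      have hcast : (q : ℝ) = (q.num.toNat : ℝ) / (q.den : ℝ) := by
        rw [Rat.cast_def]; congr 1
        exact_mod_cast (Int.toNat_of_nonneg hnum.le).symm
      set s := q.num.toNat with hs
      set t := q.den with ht
      have htR : (0 : ℝ) < (t : ℝ) := by exact_mod_cast hden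
      have hst : (s : ℝ) * Real.log 2 < (t : ℝ) * Real.log n := by
        rw [hcast] at hq2
        rw [div_lt_div_iff₀ htR hlog2] at hq2
        nlinarith
      have hle := hpowle 2 n s t (by norm_num) hn (keylt s t hst)
      have hst2 : C n * (t : ℝ) < (s : ℝ) * C 2 := by
        rw [hcast] at hq1
        rw [div_lt_div_iff₀ hC2 htR] at hq1
        nlinarith
      linarith
    · exact heq
    · exfalso
      have h1 : Real.log n / Real.log 2 < C n / C 2 := by
        rw [div_lt_div_iff₀ hlog2 hC2]; nlinarith
      obtain ⟨q, hq1, hq2⟩ := exists_rat_btwn h1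
      have hq0 : 0 < q := by
        have h0 : (0 : ℝ) < Real.log n / Real.log 2 := div_pos hlogn hlog2
        have : (0 : ℝ) < (q : ℝ) := lt_trans h0 hq1
        exact_mod_cast this
      have hnum : (0 : ℤ) < q.num := Rat.num_pos.mpr hq0
      have hden : (0 : ℕ) < q.den := q.pos
      have hcast : (q : ℝ) = (q.num.toNat : ℝ) / (q.den : ℝ) := by
        rw [Rat.cast_def]; congr 1
        exact_mod_cast (Int.toNat_of_nonneg hnum.le).symm
      set s := q.num.toNat with hs
      set t := q.den with ht
      have htR : (0 : ℝ) < (t : ℝ) := by exact_mod_cast hden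
      have hst : (t : ℝ) * Real.log n < (s : ℝ) * Real.log 2 := by
        rw [hcast] at hq1
        rw [div_lt_div_iff₀ hlog2 htR] at hq1
        nlinarith
      have hle := hpowle n 2 t s hn (by norm_num) (keylt' s t hst)
      have hst2 : (s : ℝ) * C 2 < C n * (t : ℝ) := by
        rw [hcast] at hq2
        rw [div_lt_div_iff₀ htR hC2] at hq2
        nlinarith
      linarith

/-- Let `f : [0,∞) → [-∞,∞)` be increasing and differentiable on `(0,∞)`.
If for every positive integer `k` the function `x ↦ f((k+1)x) − f(kx)` is constant
on `(0,∞)`, then there exist `a > 0` and `b ∈ ℝ` with `f(x) = a·ln x + b` for all `x > 0`. -/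
theorem stmt_0 (f : ℝ → EReal)
    (hmono : StrictMonoOn f (Set.Ici 0))
    (hdiff : DifferentiableOn ℝ (fun x => (f x).toReal) (Set.Ioi 0))
    (hconst : ∀ k : ℕ, 1 ≤ k → ∀ x ∈ Set.Ioi (0 : ℝ), ∀ y ∈ Set.Ioi (0 : ℝ),
      f ((k + 1) * x) - f (k * x) = f ((k + 1) * y) - f (k * y)) :
    ∃ a : ℝ, 0 < a ∧ ∃ b : ℝ, ∀ x : ℝ, 0 < x →
      f x = ((a * Real.log x + b : ℝ) : EReal) := by
  set g : ℝ → ℝ := fun x => (f x).toReal with hg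
  -- f takes real values on (0,∞)
  have hfin : ∀ x : ℝ, 0 < x → f x = ((g x : ℝ) : EReal) := by
    intro x hx
    have htop : f x ≠ ⊤ := by
      have h1 : f x < f (x + 1) := hmono hx.le (by positivity : (0:ℝ) ≤ x + 1) (by linarith)
      exact (h1.trans_le le_top).ne
    have hbot : f x ≠ ⊥ := by
      have h1 : f 0 < f x := hmono (Set.mem_Ici.mpr le_rfl) hx.le hx
      exact (bot_le.trans_lt h1).ne'
    exact (EReal.coe_toReal htop hbot).symm
  -- g strictly monotone on positives
  have hg_lt : ∀ x y : ℝ, 0 < x → x < y → g x < g y := by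
    intro x y hx hxy
    have h := hmono hx.le (hx.trans hxy).le hxy
    rw [hfin x hx, hfin y (hx.trans hxy)] at h
    exact_mod_cast h
  have hg_le : ∀ x y : ℝ, 0 < x → x ≤ y → g x ≤ g y := by
    intro x y hx hxy
    rcases eq_or_lt_of_le hxy with h | h
    · rw [h]
    · exact (hg_lt x y hx h).le
  -- constancy in terms of g
  have key : ∀ k : ℕ, 1 ≤ k → ∀ x : ℝ, 0 < x →
      g ((k + 1) * x) - g (k * x) = g (k + 1) - g k := by
    intro k hk x hx
    have hk0 : (0 : ℝ) < (k : ℝ) := by exact_mod_cast hk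
    have h := hconst k hk x hx 1 (by norm_num)
    have p1 : (0:ℝ) < ((k:ℝ) + 1) * x := by positivity
    have p2 : (0:ℝ) < (k:ℝ) * x := by positivity
    have p3 : (0:ℝ) < ((k:ℝ) + 1) * 1 := by positivity
    have p4 : (0:ℝ) < (k:ℝ) * 1 := by positivity
    rw [hfin _ p1, hfin _ p2, hfin _ p3, hfin _ p4, ← EReal.coe_sub, ← EReal.coe_sub] at h
    have h' : g ((k + 1) * x) - g (k * x) = g ((k + 1) * 1) - g (k * 1) := by
      exact_mod_cast h
    simpa [mul_one] using h'
  -- g (n * x) = g x + (g n - g 1)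
  have step : ∀ n : ℕ, 1 ≤ n → ∀ x : ℝ, 0 < x →
      g ((n : ℝ) * x) = g x + (g n - g 1) := by
    intro n hn
    induction n with
    | zero => omega
    | succ n ih =>
        intro x hx
        rcases Nat.eq_or_lt_of_le hn with h | h
        · simp [← h]
        · have hn1 : 1 ≤ n := by omega
          have h1 := key n hn1 x hx
          have h2 := ih hn1 x hx
          have hcast : ((n + 1 : ℕ) : ℝ) = (n : ℝ) + 1 := by push_cast; ring
          rw [hcast]
          have h3 := key n hn1 1 one_pos
          simp only [mul_one] at h3
          linarith
  set C : ℕ → ℝ := fun n => g n - g 1 with hC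
  have hCadd : ∀ m n : ℕ, 1 ≤ m → 1 ≤ n → C (m * n) = C m + C n := by
    intro m n hm hn
    have hnR : (0 : ℝ) < (n : ℝ) := by exact_mod_cast hn
    have h := step m hm (n : ℝ) hnR
    have hcast : ((m * n : ℕ) : ℝ) = (m : ℝ) * (n : ℝ) := by push_cast; ring
    simp only [hC, hcast]
    linarith
  have hCmono : ∀ m n : ℕ, 1 ≤ m → m ≤ n → C m ≤ C n := by
    intro m n hm hmn
    have hmR : (0 : ℝ) < (m : ℝ) := by exact_mod_cast hm
    have : g m ≤ g n := hg_le _ _ hmR (by exact_mod_cast hmn)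
    simp only [hC]; linarith
  have hC2 : 0 < C 2 := by
    have : g 1 < g 2 := hg_lt 1 2 one_pos one_lt_two
    simp only [hC]
    have h2 : ((2 : ℕ) : ℝ) = 2 := by norm_num
    rw [h2]; linarith
  have hlog2 : (0 : ℝ) < Real.log 2 := Real.log_pos (by norm_num)
  set a : ℝ := C 2 / Real.log 2 with ha
  have ha0 : 0 < a := div_pos hC2 hlog2
  set b : ℝ := g 1 with hb
  have hClog := addlog_aux C hCadd hCmono hC2
  have hCval : ∀ n : ℕ, 1 ≤ n → C n = a * Real.log n := by
    intro n hn
    have h := hClog n hn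
    rw [ha, div_mul_eq_mul_div, eq_div_iff hlog2.ne']
    linarith
  -- value of g at positive rationals
  have hgnat : ∀ n : ℕ, 1 ≤ n → g n = a * Real.log n + b := by
    intro n hn
    have := hCval n hn
    simp only [hC] at this
    linarith
  have hgrat : ∀ p d : ℕ, 1 ≤ p → 1 ≤ d → g ((p : ℝ) / (d : ℝ)) = a * Real.log ((p:ℝ)/(d:ℝ)) + b := by
    intro p d hp hd
    have hpR : (0 : ℝ) < (p : ℝ) := by exact_mod_cast hp
    have hdR : (0 : ℝ) < (d : ℝ) := by exact_mod_cast hd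
    have hx : (0 : ℝ) < (p : ℝ) / (d : ℝ) := by positivity
    have h := step d hd ((p : ℝ) / (d : ℝ)) hx
    have hmul : (d : ℝ) * ((p : ℝ) / (d : ℝ)) = (p : ℝ) := by field_simp
    rw [hmul] at h
    have hgp := hgnat p hp
    have hgd := hgnat d hd
    have hlog : Real.log ((p:ℝ)/(d:ℝ)) = Real.log p - Real.log d :=
      Real.log_div (ne_of_gt hpR) (ne_of_gt hdR)
    rw [hlog]
    simp only [hb] at *
    linarith
  have hgq : ∀ q : ℚ, 0 < q → g (q : ℝ) = a * Real.log (q : ℝ) + b := by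
    intro q hq
    have hnum : (0 : ℤ) < q.num := Rat.num_pos.mpr hq
    have hcast : (q : ℝ) = (q.num.toNat : ℝ) / (q.den : ℝ) := by
      rw [Rat.cast_def]; congr 1
      exact_mod_cast (Int.toNat_of_nonneg hnum.le).symm
    rw [hcast]
    exact hgrat q.num.toNat q.den (by omega) q.pos
  -- final: g x = a log x + b for all positive reals
  have hmain : ∀ x : ℝ, 0 < x → g x = a * Real.log x + b := by
    intro x hx
    by_contra hne
    rcases lt_or_gt_of_ne hne with hlt | hgt
    · -- g x < a log x + b : pick rational q with exp((g x - b)/a) < q < x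
      have hexp : Real.exp ((g x - b) / a) < x := by
        have h0 : (g x - b) / a < Real.log x := by rw [div_lt_iff₀ ha0]; nlinarith
        calc Real.exp ((g x - b) / a) < Real.exp (Real.log x) := Real.exp_lt_exp.mpr h0
          _ = x := Real.exp_log hx
      obtain ⟨q, hq1, hq2⟩ := exists_rat_btwn hexp
      have hq0 : 0 < q := by
        have : (0 : ℝ) < (q : ℝ) := lt_trans (Real.exp_pos _) hq1
        exact_mod_cast this
      have hq0R : (0 : ℝ) < (q : ℝ) := by exact_mod_cast hq0
      have h1 : g (q : ℝ) < g x := hg_lt _ _ hq0R hq2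
      have h2 : g (q : ℝ) = a * Real.log (q : ℝ) + b := hgq q hq0
      have h3 : (g x - b) / a < Real.log (q : ℝ) :=
        (Real.lt_log_iff_exp_lt hq0R).mpr hq1
      rw [div_lt_iff₀ ha0] at h3
      nlinarith
    · -- a log x + b < g x : pick rational q with x < q < exp((g x - b)/a)
      have hexp : x < Real.exp ((g x - b) / a) := by
        have h0 : Real.log x < (g x - b) / a := by rw [lt_div_iff₀ ha0]; nlinarith
        calc x = Real.exp (Real.log x) := (Real.exp_log hx).symm
          _ < Real.exp ((g x - b) / a) := Real.exp_lt_exp.mpr h0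
      obtain ⟨q, hq1, hq2⟩ := exists_rat_btwn hexp
      have hq0R : (0 : ℝ) < (q : ℝ) := lt_trans hx hq1
      have hq0 : 0 < q := by exact_mod_cast hq0R
      have h1 : g x < g (q : ℝ) := hg_lt _ _ hx hq1
      have h2 : g (q : ℝ) = a * Real.log (q : ℝ) + b := hgq q hq0
      have h3 : Real.log (q : ℝ) < (g x - b) / a :=
        (Real.log_lt_iff_lt_exp hq0R).mpr hq2
      rw [lt_div_iff₀ ha0] at h3
      nlinarith
  refine ⟨a, ha0, b, fun x hx => ?_⟩
  rw [hfin x hx, hmain x hx]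
end

section
/- Let f : (0,∞) → ℝ be differentiable and increasing, and suppose that for every positive integer k the function x ↦ f((1 + 1/k)x) − f(x) is constant on (0,∞), with constant value c_k. Then for every y > 0, y·f'(y) = lim_{k→∞} k·c_k. -/
/-- If `f` is differentiable and increasing on `(0,∞)` and for every positive integer `k`
the function `x ↦ f((1 + 1/k)x) − f(x)` has constant value `c k` on `(0,∞)`, then for
every `y > 0`, `y·f'(y) = lim_{k→∞} k·c_k`. -/
theorem stmt_1 (f : ℝ → ℝ) (c : ℕ → ℝ)
    (hdiff : ∀ x ∈ Set.Ioi (0 : ℝ), DifferentiableAt ℝ f x)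
    (hmono : MonotoneOn f (Set.Ioi 0))
    (hc : ∀ k : ℕ, 1 ≤ k → ∀ x ∈ Set.Ioi (0 : ℝ),
      f ((1 + 1 / (k : ℝ)) * x) - f x = c k) :
    ∀ y : ℝ, 0 < y →
      Filter.Tendsto (fun k : ℕ => (k : ℝ) * c k) Filter.atTop
        (nhds (y * deriv f y)) := by
  intro y hy
  have hy' : y ≠ 0 := ne_of_gt hy
  have hd := (hdiff y hy).hasDerivAt
  have hslope := hasDerivAt_iff_tendsto_slope.mp hd
  set u : ℕ → ℝ := fun k => (1 + 1 / (k : ℝ)) * y with hu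
  have hulim : Filter.Tendsto u Filter.atTop (nhdsWithin y {y}ᶜ) := by
    rw [tendsto_nhdsWithin_iff]
    constructor
    · have h1 : Filter.Tendsto (fun k : ℕ => 1 + 1 / (k : ℝ)) Filter.atTop (nhds 1) := by
        simpa using tendsto_const_nhds.add (tendsto_one_div_atTop_nhds_zero_nat : Filter.Tendsto (fun n : ℕ => 1 / (n : ℝ)) Filter.atTop (nhds 0))
      simpa [hu, one_div] using h1.mul_const y
    · filter_upwards [Filter.eventually_ge_atTop 1] with k hk
      have hk0 : (0 : ℝ) < (k : ℝ) := by exact_mod_cast hk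
      simp only [hu, Set.mem_compl_iff, Set.mem_singleton_iff]
      intro h
      have : (1 / (k : ℝ)) * y = 0 := by linear_combination h
      rcases mul_eq_zero.mp this with h1 | h2
      · exact (one_div_ne_zero (ne_of_gt hk0)) h1
      · exact hy' h2
  have hmain := (hslope.comp hulim).const_mul y
  refine hmain.congr' ?_
  filter_upwards [Filter.eventually_ge_atTop 1] with k hk
  have hk0 : (0 : ℝ) < (k : ℝ) := by exact_mod_cast hk
  have hck : f (u k) - f y = c k := hc k hk y hy
  have hdiffuk : u k - y = y / k := by simp only [hu]; rw [add_mul, one_mul, add_sub_cancel_left, one_div, div_eq_inv_mul]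
  simp only [Function.comp_apply, slope_def_field, div_eq_inv_mul]
  rw [show f (u k) = c k + f y by linarith [hck], hdiffuk]
  field_simp
  ring
end

section
/- Let f : [0,∞) → [-∞,∞) be increasing and differentiable on (0,∞). If the additive welfarist rule with f returns an EF1 allocation on every two-agent profile with additive utilities in which both agents can get nonzero utility, then for every positive integer k the function x ↦ f((k+1)x) − f(kx) is constant on (0,∞). Concretely: for all k ≥ 1 and all y, z > 0, f((k+1)y) − f(ky) = f((k+1)z) − f(kz). -/
open Set Filter Topology

private lemma sum_ite_card' {m : ℕ} (L : Fin m) (A : Finset (Fin m)) (c v : ℝ) :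
    ∑ j ∈ A, (if j = L then c else v) = A.card * v + (if L ∈ A then c - v else 0) := by
  have h : ∀ j ∈ A, (if j = L then c else v) = v + (if j = L then c - v else 0) := by
    intro j _; split <;> ring
  rw [Finset.sum_congr rfl h, Finset.sum_add_distrib, Finset.sum_const,
    Finset.sum_ite_eq' A L (fun _ => c - v), nsmul_eq_mul]

private lemma key_ineq' (f : ℝ → EReal)
    (hEF1 : ∀ m : ℕ, ∀ u1 u2 : Fin m → ℝ,
      (∀ j, 0 ≤ u1 j) → (∀ j, 0 ≤ u2 j) →
      (∃ B : Finset (Fin m), 0 < ∑ j ∈ B, u1 j ∧ 0 < ∑ j ∈ Bᶜ, u2 j) →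
      ∀ A1 : Finset (Fin m),
        (∀ B1 : Finset (Fin m),
          f (∑ j ∈ B1, u1 j) + f (∑ j ∈ B1ᶜ, u2 j)
            ≤ f (∑ j ∈ A1, u1 j) + f (∑ j ∈ A1ᶜ, u2 j)) →
        (((A1ᶜ : Finset (Fin m)) ≠ ∅ →
            ∃ g ∈ A1ᶜ, ∑ j ∈ A1ᶜ \ {g}, u1 j ≤ ∑ j ∈ A1, u1 j) ∧
          (A1 ≠ ∅ → ∃ g ∈ A1, ∑ j ∈ A1 \ {g}, u2 j ≤ ∑ j ∈ A1ᶜ, u2 j)))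
    (k : ℕ) (hk : 1 ≤ k) (y z t ε : ℝ) (hy : 0 < y) (hz : 0 < z) (ht : 0 < t)
    (hε : 0 < ε) (hεy : ε < y) (hεt : ε * t < z) :
    f (((k:ℝ)+1)*y + ε) + f ((k:ℝ)*z) ≤
      max (f (((k:ℝ)+1)*y) + f ((k:ℝ)*z + ε*t)) (f ((k:ℝ)*y + ε) + f (((k:ℝ)+1)*z)) := by
  set m := 2*k+2 with hm
  have hLlt : 2*k+1 < m := by omega
  set L : Fin m := ⟨2*k+1, hLlt⟩ with hL
  set u1 : Fin m → ℝ := fun j => if j = L then ε else y with hu1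
  set u2 : Fin m → ℝ := fun j => if j = L then ε*t else z with hu2
  have h1nn : ∀ j, 0 ≤ u1 j := fun j => by
    simp only [hu1]; split <;> positivity
  have h2nn : ∀ j, 0 ≤ u2 j := fun j => by
    simp only [hu2]; split <;> positivity
  have hexB : ∃ B : Finset (Fin m), 0 < ∑ j ∈ B, u1 j ∧ 0 < ∑ j ∈ Bᶜ, u2 j := by
    refine ⟨{⟨0, by omega⟩}, ?_, ?_⟩
    · rw [Finset.sum_singleton]
      have hne : (⟨0, by omega⟩ : Fin m) ≠ L := by
        intro h
        have h2 : (0:ℕ) = 2*k+1 := congrArg Fin.val h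
        omega
      simp only [hu1, if_neg hne]; exact hy
    · refine Finset.sum_pos' (fun j _ => h2nn j) ⟨⟨1, by omega⟩, ?_, ?_⟩
      · rw [Finset.mem_compl, Finset.mem_singleton]
        intro h
        have h2 : (1:ℕ) = 0 := congrArg Fin.val h
        omega
      · have hne : (⟨1, by omega⟩ : Fin m) ≠ L := by
          intro h
          have h2 : (1:ℕ) = 2*k+1 := congrArg Fin.val h
          omega
        simp only [hu2, if_neg hne]; exact hz
  obtain ⟨A, -, hA⟩ := Finset.exists_max_image (Finset.univ : Finset (Finset (Fin m)))
    (fun A => f (∑ j ∈ A, u1 j) + f (∑ j ∈ Aᶜ, u2 j)) ⟨∅, Finset.mem_univ _⟩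
  have hAmax : ∀ B1 : Finset (Fin m),
      f (∑ j ∈ B1, u1 j) + f (∑ j ∈ B1ᶜ, u2 j) ≤ f (∑ j ∈ A, u1 j) + f (∑ j ∈ Aᶜ, u2 j) :=
    fun B1 => hA B1 (Finset.mem_univ _)
  obtain ⟨hE1, hE2⟩ := hEF1 m u1 u2 h1nn h2nn hexB A hAmax
  have su1 : ∀ S : Finset (Fin m), ∑ j ∈ S, u1 j = S.card * y + (if L ∈ S then ε - y else 0) :=
    fun S => sum_ite_card' L S ε y
  have su2 : ∀ S : Finset (Fin m), ∑ j ∈ S, u2 j = S.card * z + (if L ∈ S then ε*t - z else 0) :=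
    fun S => sum_ite_card' L S (ε*t) z
  have hcardm : ∀ S : Finset (Fin m), S.card ≤ m := fun S => by
    simpa using Finset.card_le_univ S
  have hccard : ∀ S : Finset (Fin m), (Sᶜ).card = m - S.card := fun S => by
    rw [Finset.card_compl, Fintype.card_fin]
  have hcm : A.card ≤ m := hcardm A
  have hcastc : ((m - A.card : ℕ) : ℝ) = 2*(k:ℝ) + 2 - A.card := by
    rw [Nat.cast_sub hcm]; push_cast [hm]; ring
  have claimA : k+1 ≤ A.card := by
    by_contra hlt
    push_neg at hlt
    have hckR : (A.card:ℝ) ≤ k := by exact_mod_cast Nat.lt_succ_iff.mp hlt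
    have hne : (Aᶜ : Finset (Fin m)) ≠ ∅ := by
      rw [← Finset.nonempty_iff_ne_empty, ← Finset.card_pos, hccard]
      omega
    obtain ⟨g, hg, hineq⟩ := hE1 hne
    rw [Finset.sdiff_singleton_eq_erase, Finset.sum_erase_eq_sub hg, su1, su1, hccard,
      hcastc] at hineq
    have hub : u1 g ≤ y := by simp only [hu1]; split <;> linarith
    have hnn : (0:ℝ) ≤ ((k:ℝ) - A.card) * y := mul_nonneg (by linarith) hy.le
    by_cases hLA : L ∈ A
    · rw [if_pos hLA, if_neg (by simp [Finset.mem_compl, hLA])] at hineq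
      nlinarith [hineq, hub, hnn]
    · rw [if_neg hLA, if_pos (Finset.mem_compl.mpr hLA)] at hineq
      nlinarith [hineq, hub, hnn]
  have claimB : A.card ≤ k+1 := by
    by_contra hlt
    push_neg at hlt
    have hckR : (k:ℝ) + 2 ≤ A.card := by exact_mod_cast hlt
    have hne : A ≠ ∅ := by
      rw [← Finset.nonempty_iff_ne_empty, ← Finset.card_pos]
      omega
    obtain ⟨g, hg, hineq⟩ := hE2 hne
    rw [Finset.sdiff_singleton_eq_erase, Finset.sum_erase_eq_sub hg, su2, su2, hccard,
      hcastc] at hineq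
    have hub : u2 g ≤ z := by simp only [hu2]; split <;> linarith
    have hnn : (0:ℝ) ≤ ((A.card:ℝ) - ((k:ℝ)+2)) * z := mul_nonneg (by linarith) hz.le
    by_cases hLA : L ∈ A
    · rw [if_pos hLA, if_neg (by simp [Finset.mem_compl, hLA])] at hineq
      nlinarith [hineq, hub, hnn, mul_pos hε ht]
    · rw [if_neg hLA, if_pos (Finset.mem_compl.mpr hLA)] at hineq
      nlinarith [hineq, hub, hnn]
  have hcard : A.card = k+1 := le_antisymm claimB claimA
  have hccA : (Aᶜ : Finset (Fin m)).card = k+1 := by rw [hccard, hcard]; omega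
  have hkm : k ≤ m := by omega
  set B1 : Finset (Fin m) := (Finset.image (Fin.castLE hkm) Finset.univ)ᶜ with hB1
  have hcardIm : (Finset.image (Fin.castLE hkm) (Finset.univ : Finset (Fin k))).card = k := by
    rw [Finset.card_image_of_injective _ (Fin.castLE_injective hkm), Finset.card_univ,
      Fintype.card_fin]
  have hLB1 : L ∈ B1 := by
    rw [hB1, Finset.mem_compl]
    intro hmem
    obtain ⟨j, -, hj⟩ := Finset.mem_image.mp hmem
    have h2 : (j:ℕ) = 2*k+1 := congrArg Fin.val hj
    omega
  have hB1card : B1.card = k+2 := by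
    rw [hB1, Finset.card_compl, Fintype.card_fin, hcardIm]; omega
  have e3 : ∑ j ∈ B1, u1 j = ((k:ℝ)+1)*y + ε := by
    rw [su1, hB1card, if_pos hLB1]; push_cast; ring
  have e4 : ∑ j ∈ B1ᶜ, u2 j = (k:ℝ)*z := by
    rw [su2, hB1, compl_compl, hcardIm, if_neg]
    · ring
    · rw [hB1, Finset.mem_compl] at hLB1; exact hLB1
  have hfinal := hAmax B1
  rw [e3, e4] at hfinal
  by_cases hLA : L ∈ A
  · have e1 : ∑ j ∈ A, u1 j = (k:ℝ)*y + ε := by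
      rw [su1, hcard, if_pos hLA]; push_cast; ring
    have e2 : ∑ j ∈ Aᶜ, u2 j = ((k:ℝ)+1)*z := by
      rw [su2, hccA, if_neg (by simp [Finset.mem_compl, hLA])]; push_cast; ring
    rw [e1, e2] at hfinal
    exact le_trans hfinal (le_max_right _ _)
  · have e1 : ∑ j ∈ A, u1 j = ((k:ℝ)+1)*y := by
      rw [su1, hcard, if_neg hLA]; push_cast; ring
    have e2 : ∑ j ∈ Aᶜ, u2 j = (k:ℝ)*z + ε*t := by
      rw [su2, hccA, if_pos (Finset.mem_compl.mpr hLA)]; push_cast; ring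
    rw [e1, e2] at hfinal
    exact le_trans hfinal (le_max_left _ _)

private lemma deriv_nonpos_of_right_max' (h : ℝ → ℝ) (d ε1 : ℝ) (hε1 : 0 < ε1)
    (hd : HasDerivAt h d 0) (hle : ∀ ε ∈ Set.Ioo (0:ℝ) ε1, h ε ≤ h 0) : d ≤ 0 := by
  have H := hd.hasDerivWithinAt (s := Set.Ioi (0:ℝ))
  rw [hasDerivWithinAt_iff_tendsto_slope] at H
  have hs : Set.Ioi (0:ℝ) \ {0} = Set.Ioi 0 :=
    Set.diff_singleton_eq_self (by simp)
  rw [hs] at H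
  refine le_of_tendsto H ?_
  filter_upwards [Ioo_mem_nhdsGT_of_mem (⟨le_refl (0:ℝ), hε1⟩ : (0:ℝ) ∈ Set.Ico 0 ε1)] with ε hε
  have hslope : slope h 0 ε = (h ε - h 0) / ε := by
    rw [slope_def_field]; ring_nf
  rw [hslope]
  exact div_nonpos_of_nonpos_of_nonneg (sub_nonpos.mpr (hle ε hε)) hε.1.le

/-- If the additive welfarist rule with `f : [0,∞) → [-∞,∞)` (increasing, differentiable
on `(0,∞)`) returns an EF1 allocation on every two-agent profile with additive
nonnegative utilities in which both agents can obtain nonzero utility, then for every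
positive integer `k` and all `y, z > 0`,
`f((k+1)y) − f(ky) = f((k+1)z) − f(kz)`. -/
theorem stmt_11 (f : ℝ → EReal)
    (hmono : StrictMonoOn f (Set.Ici 0))
    (hdiff : DifferentiableOn ℝ (fun x => (f x).toReal) (Set.Ioi 0))
    (hEF1 : ∀ m : ℕ, ∀ u1 u2 : Fin m → ℝ,
      (∀ j, 0 ≤ u1 j) → (∀ j, 0 ≤ u2 j) →
      (∃ B : Finset (Fin m), 0 < ∑ j ∈ B, u1 j ∧ 0 < ∑ j ∈ Bᶜ, u2 j) →
      ∀ A1 : Finset (Fin m),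
        (∀ B1 : Finset (Fin m),
          f (∑ j ∈ B1, u1 j) + f (∑ j ∈ B1ᶜ, u2 j)
            ≤ f (∑ j ∈ A1, u1 j) + f (∑ j ∈ A1ᶜ, u2 j)) →
        (((A1ᶜ : Finset (Fin m)) ≠ ∅ →
            ∃ g ∈ A1ᶜ, ∑ j ∈ A1ᶜ \ {g}, u1 j ≤ ∑ j ∈ A1, u1 j) ∧
          (A1 ≠ ∅ → ∃ g ∈ A1, ∑ j ∈ A1 \ {g}, u2 j ≤ ∑ j ∈ A1ᶜ, u2 j))) :
    ∀ k : ℕ, 1 ≤ k → ∀ y : ℝ, 0 < y → ∀ z : ℝ, 0 < z →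
      f (((k : ℝ) + 1) * y) - f ((k : ℝ) * y)
        = f (((k : ℝ) + 1) * z) - f ((k : ℝ) * z) := by
  intro k hk y hy z hz
  set g : ℝ → ℝ := fun x => (f x).toReal with hgdef
  have kpos : (0:ℝ) < (k:ℝ) := by
    have : 0 < k := hk
    exact_mod_cast this
  have hfinb : ∀ x : ℝ, 0 < x → f x ≠ ⊥ := fun x hx =>
    ne_bot_of_gt (hmono (Set.mem_Ici.mpr (le_refl 0)) hx.le hx)
  have hfint : ∀ x : ℝ, 0 < x → f x ≠ ⊤ := fun x hx =>
    ne_top_of_lt (hmono hx.le (by linarith : (0:ℝ) ≤ x + 1) (by linarith))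
  have hfin : ∀ x : ℝ, 0 < x → f x = ((g x : ℝ) : EReal) := fun x hx =>
    (EReal.coe_toReal (hfint x hx) (hfinb x hx)).symm
  have gmono : ∀ a b : ℝ, 0 < a → a < b → g a < g b := by
    intro a b ha hab
    have h := hmono ha.le (by linarith : (0:ℝ) ≤ b) hab
    rw [hfin a ha, hfin b (by linarith)] at h
    exact_mod_cast h
  have gdiff : ∀ x : ℝ, 0 < x → HasDerivAt g (deriv g x) x :=
    fun x hx => ((hdiff x hx).differentiableAt (Ioi_mem_nhds hx)).hasDerivAt
  have realkey : ∀ a b t ε : ℝ, 0 < a → 0 < b → 0 < t → 0 < ε → ε < a → ε * t < b →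
      g (((k:ℝ)+1)*a + ε) + g ((k:ℝ)*b) ≤
        max (g (((k:ℝ)+1)*a) + g ((k:ℝ)*b + ε*t)) (g ((k:ℝ)*a + ε) + g (((k:ℝ)+1)*b)) := by
    intro a b t ε ha hb ht hε hεa hεt
    have h := key_ineq' f hEF1 k hk a b t ε ha hb ht hε hεa hεt
    have p1 : (0:ℝ) < ((k:ℝ)+1)*a + ε := by positivity
    have p2 : (0:ℝ) < (k:ℝ)*b := mul_pos kpos hb
    have p3 : (0:ℝ) < ((k:ℝ)+1)*a := by positivity
    have p4 : (0:ℝ) < (k:ℝ)*b + ε*t := by positivity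
    have p5 : (0:ℝ) < (k:ℝ)*a + ε := by positivity
    have p6 : (0:ℝ) < ((k:ℝ)+1)*b := by positivity
    rw [hfin _ p1, hfin _ p2, hfin _ p3, hfin _ p4, hfin _ p5, hfin _ p6,
      ← EReal.coe_add, ← EReal.coe_add, ← EReal.coe_add] at h
    rcases le_max_iff.mp h with h' | h'
    · exact le_max_of_le_left (by exact_mod_cast h')
    · exact le_max_of_le_right (by exact_mod_cast h')
  -- pointwise derivative vanishing claim
  have claimD : ∀ b : ℝ, 0 < b → ∀ y' : ℝ, 0 < y' →
      g (((k:ℝ)+1)*b) - g ((k:ℝ)*b) < g (((k:ℝ)+1)*y') - g ((k:ℝ)*y') →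
      deriv g (((k:ℝ)+1)*y') ≤ 0 := by
    intro b hb y' hy' hφlt
    set d1 := deriv g (((k:ℝ)+1)*y') with hd1
    set d2 := deriv g ((k:ℝ)*b) with hd2
    have hstep : ∀ t : ℝ, 0 < t → d1 ≤ d2 * t := by
      intro t ht
      set η := (g (((k:ℝ)+1)*y') - g ((k:ℝ)*y')) - (g (((k:ℝ)+1)*b) - g ((k:ℝ)*b)) with hηdef
      have hηpos : 0 < η := by rw [hηdef]; linarith
      have hcg : Filter.Tendsto (fun ε : ℝ => g ((k:ℝ)*y' + ε)) (𝓝 0) (𝓝 (g ((k:ℝ)*y'))) := by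
        have h1 : ContinuousAt g ((k:ℝ)*y') := (gdiff _ (mul_pos kpos hy')).continuousAt
        have h2 : Filter.Tendsto (fun ε : ℝ => (k:ℝ)*y' + ε) (𝓝 0) (𝓝 ((k:ℝ)*y')) := by
          have hc : Continuous (fun ε : ℝ => (k:ℝ)*y' + ε) := continuous_const.add continuous_id
          simpa using hc.tendsto (0:ℝ)
        exact Filter.Tendsto.comp h1 h2
      have hev2 : ∀ᶠ ε in 𝓝 (0:ℝ), g ((k:ℝ)*y' + ε) < g ((k:ℝ)*y') + η :=
        hcg (Iio_mem_nhds (by linarith))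
      obtain ⟨ε0, hε0pos, hball⟩ := Metric.eventually_nhds_iff.mp hev2
      set ε1 := min ε0 (min y' (b / t)) with hε1def
      have hε1pos : 0 < ε1 := lt_min hε0pos (lt_min hy' (div_pos hb ht))
      have hle : ∀ ε ∈ Set.Ioo (0:ℝ) ε1,
          g (((k:ℝ)+1)*y' + ε) - g ((k:ℝ)*b + ε*t)
            ≤ g (((k:ℝ)+1)*y' + 0) - g ((k:ℝ)*b + 0*t) := by
        intro ε hεm
        obtain ⟨hεp, hεlt⟩ := hεm
        rw [add_zero, zero_mul, add_zero]
        have hεy' : ε < y' := lt_of_lt_of_le hεlt ((min_le_right _ _).trans (min_le_left _ _))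
        have hεb : ε * t < b := by
          have hlt2 : ε < b / t := lt_of_lt_of_le hεlt ((min_le_right _ _).trans (min_le_right _ _))
          exact (lt_div_iff₀ ht).mp hlt2
        have hmax := realkey y' b t ε hy' hb ht hεp hεy' hεb
        rcases le_max_iff.mp hmax with hW1 | hW2
        · linarith
        · exfalso
          have hb1 : g (((k:ℝ)+1)*y') ≤ g (((k:ℝ)+1)*y' + ε) :=
            (gmono _ _ (by positivity) (by linarith)).le
          have hdist : dist ε (0:ℝ) < ε0 := by
            rw [Real.dist_eq, sub_zero, abs_of_pos hεp]
            exact lt_of_lt_of_le hεlt (min_le_left _ _)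
          have hsm := hball hdist
          linarith
      have hiA : HasDerivAt (fun ε : ℝ => ((k:ℝ)+1)*y' + ε) 1 0 := by
        simpa using (hasDerivAt_id (0:ℝ)).const_add (((k:ℝ)+1)*y')
      have hoA : HasDerivAt g d1 (((k:ℝ)+1)*y' + 0) := by
        rw [add_zero]; exact gdiff (((k:ℝ)+1)*y') (by positivity)
      have HA : HasDerivAt (fun ε : ℝ => g (((k:ℝ)+1)*y' + ε)) d1 0 := by
        have := hoA.comp 0 hiA
        simpa [Function.comp_def] using this
      have hiB : HasDerivAt (fun ε : ℝ => (k:ℝ)*b + ε*t) t 0 := by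
        simpa using ((hasDerivAt_id (0:ℝ)).mul_const t).const_add ((k:ℝ)*b)
      have hoB : HasDerivAt g d2 ((k:ℝ)*b + 0*t) := by
        rw [zero_mul, add_zero]; exact gdiff ((k:ℝ)*b) (mul_pos kpos hb)
      have HB : HasDerivAt (fun ε : ℝ => g ((k:ℝ)*b + ε*t)) (d2 * t) 0 := by
        have := hoB.comp 0 hiB
        exact this
      have Hh : HasDerivAt (fun ε : ℝ => g (((k:ℝ)+1)*y' + ε) - g ((k:ℝ)*b + ε*t)) (d1 - d2*t) 0 :=
        HA.sub HB
      have := deriv_nonpos_of_right_max' _ _ ε1 hε1pos Hh hle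
      linarith
    by_contra hpos
    push_neg at hpos
    have hden : (0:ℝ) < 2*(|d2|+1) := by positivity
    have ht' : 0 < d1 / (2*(|d2|+1)) := div_pos hpos hden
    have h := hstep _ ht'
    have habs : d2 ≤ |d2| := le_abs_self d2
    have habs0 : 0 ≤ |d2| := abs_nonneg d2
    have key2 : d2 * (d1 / (2*(|d2|+1))) ≤ |d2| * (d1 / (2*(|d2|+1))) :=
      mul_le_mul_of_nonneg_right habs ht'.le
    have h2 : |d2| * (d1 / (2*(|d2|+1))) < d1 := by
      rw [mul_div_assoc', div_lt_iff₀ hden]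
      nlinarith
    linarith
  suffices hφ : ∀ a b : ℝ, 0 < a → 0 < b →
      g (((k:ℝ)+1)*a) - g ((k:ℝ)*a) ≤ g (((k:ℝ)+1)*b) - g ((k:ℝ)*b) by
    have h1 := hφ y z hy hz
    have h2 := hφ z y hz hy
    have heq : g (((k:ℝ)+1)*y) - g ((k:ℝ)*y) = g (((k:ℝ)+1)*z) - g ((k:ℝ)*z) :=
      le_antisymm h1 h2
    rw [hfin _ (by positivity), hfin _ (mul_pos kpos hy), hfin _ (by positivity),
      hfin _ (mul_pos kpos hz), ← EReal.coe_sub, ← EReal.coe_sub]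
    exact_mod_cast heq
  intro a b ha hb
  by_contra hcon
  push_neg at hcon
  have hφcont : Filter.Tendsto (fun x => g (((k:ℝ)+1)*x) - g ((k:ℝ)*x)) (𝓝 a)
      (𝓝 (g (((k:ℝ)+1)*a) - g ((k:ℝ)*a))) := by
    have c1 : Filter.Tendsto (fun x : ℝ => g (((k:ℝ)+1)*x)) (𝓝 a) (𝓝 (g (((k:ℝ)+1)*a))) := by
      refine Filter.Tendsto.comp ((gdiff _ (by positivity)).continuousAt) ?_
      have hc : Continuous (fun x : ℝ => ((k:ℝ)+1)*x) := continuous_const.mul continuous_id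
      simpa using hc.tendsto a
    have c2 : Filter.Tendsto (fun x : ℝ => g ((k:ℝ)*x)) (𝓝 a) (𝓝 (g ((k:ℝ)*a))) := by
      refine Filter.Tendsto.comp ((gdiff _ (mul_pos kpos ha)).continuousAt) ?_
      have hc : Continuous (fun x : ℝ => (k:ℝ)*x) := continuous_const.mul continuous_id
      simpa using hc.tendsto a
    exact c1.sub c2
  have hev : ∀ᶠ x in 𝓝 a, g (((k:ℝ)+1)*b) - g ((k:ℝ)*b) < g (((k:ℝ)+1)*x) - g ((k:ℝ)*x) :=
    hφcont (Ioi_mem_nhds hcon)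
  obtain ⟨δ0, hδ0, hball⟩ := Metric.eventually_nhds_iff.mp hev
  set δ := min (δ0/2) (a/2) with hδdef
  have hδpos : 0 < δ := lt_min (by linarith) (by linarith)
  have hδa : δ ≤ a/2 := min_le_right _ _
  have hδ0' : δ < δ0 := lt_of_le_of_lt (min_le_left _ _) (by linarith)
  set p := ((k:ℝ)+1)*(a - δ) with hpdef
  set q := ((k:ℝ)+1)*(a + δ) with hqdef
  have hk1 : (0:ℝ) < (k:ℝ)+1 := by positivity
  have hppos : 0 < p := by
    rw [hpdef]; apply mul_pos hk1; linarith
  have hsub : Set.Ioo p q ⊆ Set.Ioi 0 := fun x hx => lt_trans hppos hx.1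
  have hderivs : ∀ x ∈ interior (Set.Ioo p q), deriv g x ≤ 0 := by
    rw [interior_Ioo]
    intro x hx
    set y' := x / ((k:ℝ)+1) with hy'def
    have hxy' : x = ((k:ℝ)+1)*y' := by
      rw [hy'def]; field_simp
    have hy'lo : a - δ < y' := by
      rw [hy'def, lt_div_iff₀ hk1]
      have := hx.1
      rw [hpdef] at this; linarith [this]
    have hy'hi : y' < a + δ := by
      rw [hy'def, div_lt_iff₀ hk1]
      have := hx.2
      rw [hqdef] at this; linarith [this]
    have hy'pos : 0 < y' := by linarith
    have hdist : dist y' a < δ0 := by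
      rw [Real.dist_eq, abs_lt]
      constructor <;> linarith
    have := claimD b hb y' hy'pos (hball hdist)
    rw [hxy']; exact this
  have hanti : AntitoneOn g (Set.Ioo p q) := by
    apply antitoneOn_of_deriv_nonpos (convex_Ioo p q)
    · exact (hdiff.mono hsub).continuousOn
    · rw [interior_Ioo]; exact hdiff.mono hsub
    · exact hderivs
  have hmem1 : ((k:ℝ)+1)*a ∈ Set.Ioo p q := by
    constructor
    · rw [hpdef]; nlinarith
    · rw [hqdef]; nlinarith
  have hmem2 : ((k:ℝ)+1)*(a + δ/2) ∈ Set.Ioo p q := by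
    constructor
    · rw [hpdef]; nlinarith
    · rw [hqdef]; nlinarith
  have hlt : g (((k:ℝ)+1)*a) < g (((k:ℝ)+1)*(a + δ/2)) :=
    gmono _ _ (by positivity) (by nlinarith)
  have hge := hanti hmem1 hmem2 (by nlinarith)
  linarith
end

section
/- Let f : [0,∞) → [-∞,∞) be increasing and differentiable on (0,∞). If an additive welfarist rule with function f returns an EF1 allocation for every profile with two agents (with additive utilities) in which both agents can receive nonzero utility, then there exist a > 0 and b ∈ ℝ such that f(x) = a·ln x + b for all x > 0 and f(0) = −∞; i.e., the rule is the maximum Nash welfare rule. -/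
private theorem key3 (f : ℝ → EReal)
    (hEF1 : ∀ m : ℕ, ∀ u1 u2 : Fin m → ℝ,
      (∀ j, 0 ≤ u1 j) → (∀ j, 0 ≤ u2 j) →
      (∃ B : Finset (Fin m), 0 < ∑ j ∈ B, u1 j ∧ 0 < ∑ j ∈ Bᶜ, u2 j) →
      ∀ A1 : Finset (Fin m),
        (∀ B1 : Finset (Fin m),
          f (∑ j ∈ B1, u1 j) + f (∑ j ∈ B1ᶜ, u2 j)
            ≤ f (∑ j ∈ A1, u1 j) + f (∑ j ∈ A1ᶜ, u2 j)) →
        (((A1ᶜ : Finset (Fin m)) ≠ ∅ →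
            ∃ g ∈ A1ᶜ, ∑ j ∈ A1ᶜ \ {g}, u1 j ≤ ∑ j ∈ A1, u1 j) ∧
          (A1 ≠ ∅ → ∃ g ∈ A1, ∑ j ∈ A1 \ {g}, u2 j ≤ ∑ j ∈ A1ᶜ, u2 j)))
    (w α y η : ℝ) (hα : 0 < α) (hαw : α < w) (hη : 0 < η) (hηy : η < y) :
    f α + f (y + y) ≤ max (f w + f (y + η)) (f (w + α) + f y) := by
  have hw : 0 < w := hα.trans hαw
  have hy : 0 < y := hη.trans hηy
  obtain ⟨A, hAmax⟩ := Finite.exists_max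
    (fun B : Finset (Fin 3) => f (∑ j ∈ B, ![w,w,α] j) + f (∑ j ∈ Bᶜ, ![y,y,η] j))
  have h1 : ∀ j, 0 ≤ ![w,w,α] j := by intro j; fin_cases j <;> simp <;> linarith
  have h2 : ∀ j, 0 ≤ ![y,y,η] j := by intro j; fin_cases j <;> simp <;> linarith
  have hex : ∃ B : Finset (Fin 3), 0 < ∑ j ∈ B, ![w,w,α] j ∧ 0 < ∑ j ∈ Bᶜ, ![y,y,η] j := by
    refine ⟨{0}, by simpa using hw, ?_⟩
    rw [show ({0} : Finset (Fin 3))ᶜ = {1,2} from by decide]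
    simp; linarith
  obtain ⟨hefa, hefb⟩ := hEF1 3 ![w,w,α] ![y,y,η] h1 h2 hex A hAmax
  have hB := hAmax {2}
  rw [show ({2} : Finset (Fin 3))ᶜ = {0,1} from by decide] at hB
  clear hEF1 hAmax h1 h2 hex
  have hcases : ∀ B : Finset (Fin 3), B = ∅ ∨ B = {0} ∨ B = {1} ∨ B = {2} ∨ B = {0,1} ∨
      B = {0,2} ∨ B = {1,2} ∨ B = {0,1,2} := by decide
  rcases hcases A with rfl|rfl|rfl|rfl|rfl|rfl|rfl|rfl
  · exfalso
    rw [show (∅ : Finset (Fin 3))ᶜ = {0,1,2} from by decide] at hefa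
    obtain ⟨g, hg, hle⟩ := hefa (by decide)
    fin_cases hg <;> simp at hle <;> linarith
  · rw [show ({0} : Finset (Fin 3))ᶜ = {1,2} from by decide] at hB
    simp only [Finset.sum_singleton, Finset.sum_pair (by decide : (0:Fin 3) ≠ 1),
      Finset.sum_pair (by decide : (1:Fin 3) ≠ 2)] at hB
    simp at hB
    exact le_trans hB (le_max_left _ _)
  · rw [show ({1} : Finset (Fin 3))ᶜ = {0,2} from by decide] at hB
    simp at hB
    exact le_trans hB (le_max_left _ _)
  · exfalso
    rw [show ({2} : Finset (Fin 3))ᶜ = {0,1} from by decide] at hefa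
    obtain ⟨g, hg, hle⟩ := hefa (by decide)
    fin_cases hg <;> simp at hle <;> linarith
  · exfalso
    obtain ⟨g, hg, hle⟩ := hefb (by decide)
    rw [show ({0,1} : Finset (Fin 3))ᶜ = {2} from by decide] at hle
    fin_cases hg <;> simp at hle <;> linarith
  · rw [show ({0,2} : Finset (Fin 3))ᶜ = {1} from by decide] at hB
    simp at hB
    exact le_trans hB (le_max_right _ _)
  · rw [show ({1,2} : Finset (Fin 3))ᶜ = {0} from by decide] at hB
    simp at hB
    exact le_trans hB (le_max_right _ _)
  · exfalso
    obtain ⟨g, hg, hle⟩ := hefb (by decide)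
    rw [show ({0,1,2} : Finset (Fin 3))ᶜ = ∅ from by decide] at hle
    fin_cases hg <;> simp at hle <;> linarith


private theorem key4 (f : ℝ → EReal)
    (hEF1 : ∀ m : ℕ, ∀ u1 u2 : Fin m → ℝ,
      (∀ j, 0 ≤ u1 j) → (∀ j, 0 ≤ u2 j) →
      (∃ B : Finset (Fin m), 0 < ∑ j ∈ B, u1 j ∧ 0 < ∑ j ∈ Bᶜ, u2 j) →
      ∀ A1 : Finset (Fin m),
        (∀ B1 : Finset (Fin m),
          f (∑ j ∈ B1, u1 j) + f (∑ j ∈ B1ᶜ, u2 j)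
            ≤ f (∑ j ∈ A1, u1 j) + f (∑ j ∈ A1ᶜ, u2 j)) →
        (((A1ᶜ : Finset (Fin m)) ≠ ∅ →
            ∃ g ∈ A1ᶜ, ∑ j ∈ A1ᶜ \ {g}, u1 j ≤ ∑ j ∈ A1, u1 j) ∧
          (A1 ≠ ∅ → ∃ g ∈ A1, ∑ j ∈ A1 \ {g}, u2 j ≤ ∑ j ∈ A1ᶜ, u2 j)))
    (w α y η : ℝ) (hα : 0 < α) (hαw : α < w + w) (hη : 0 < η) (hηy : η < y) :
    f α + f (y + (y + y)) ≤ max (f (w + α) + f (y + y)) (f (w + w) + f (y + η)) := by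
  have hw : 0 < w := by linarith
  have hy : 0 < y := hη.trans hηy
  obtain ⟨A, hAmax⟩ := Finite.exists_max
    (fun B : Finset (Fin 4) => f (∑ j ∈ B, ![w,w,w,α] j) + f (∑ j ∈ Bᶜ, ![y,y,y,η] j))
  have h1 : ∀ j, 0 ≤ ![w,w,w,α] j := by intro j; fin_cases j <;> simp <;> linarith
  have h2 : ∀ j, 0 ≤ ![y,y,y,η] j := by intro j; fin_cases j <;> simp <;> linarith
  have hex : ∃ B : Finset (Fin 4), 0 < ∑ j ∈ B, ![w,w,w,α] j ∧ 0 < ∑ j ∈ Bᶜ, ![y,y,y,η] j := by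
    refine ⟨{0}, by simpa using hw, ?_⟩
    rw [show ({0} : Finset (Fin 4))ᶜ = {1,2,3} from by decide]
    simp; linarith
  obtain ⟨hefa, hefb⟩ := hEF1 4 ![w,w,w,α] ![y,y,y,η] h1 h2 hex A hAmax
  have hB := hAmax {3}
  rw [show ({3} : Finset (Fin 4))ᶜ = {0,1,2} from by decide] at hB
  clear hEF1 hAmax h1 h2 hex
  have hcases : ∀ B : Finset (Fin 4), B = ∅ ∨ B = {0} ∨ B = {1} ∨ B = {2} ∨ B = {3} ∨
      B = {0,1} ∨ B = {0,2} ∨ B = {0,3} ∨ B = {1,2} ∨ B = {1,3} ∨ B = {2,3} ∨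
      B = {0,1,2} ∨ B = {0,1,3} ∨ B = {0,2,3} ∨ B = {1,2,3} ∨ B = {0,1,2,3} := by decide
  rcases hcases A with rfl|rfl|rfl|rfl|rfl|rfl|rfl|rfl|rfl|rfl|rfl|rfl|rfl|rfl|rfl|rfl
  · exfalso
    rw [show (∅ : Finset (Fin 4))ᶜ = {0,1,2,3} from by decide] at hefa
    obtain ⟨g, hg, hle⟩ := hefa (by decide)
    fin_cases hg <;> simp at hle <;> linarith
  · exfalso
    rw [show ({0} : Finset (Fin 4))ᶜ = {1,2,3} from by decide] at hefa
    obtain ⟨g, hg, hle⟩ := hefa (by decide)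
    fin_cases hg <;> simp at hle <;> linarith
  · exfalso
    rw [show ({1} : Finset (Fin 4))ᶜ = {0,2,3} from by decide] at hefa
    obtain ⟨g, hg, hle⟩ := hefa (by decide)
    fin_cases hg <;> simp at hle <;> linarith
  · exfalso
    rw [show ({2} : Finset (Fin 4))ᶜ = {0,1,3} from by decide] at hefa
    obtain ⟨g, hg, hle⟩ := hefa (by decide)
    fin_cases hg <;> simp at hle <;> linarith
  · exfalso
    rw [show ({3} : Finset (Fin 4))ᶜ = {0,1,2} from by decide] at hefa
    obtain ⟨g, hg, hle⟩ := hefa (by decide)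
    fin_cases hg <;> simp at hle <;> linarith
  · rw [show ({0,1} : Finset (Fin 4))ᶜ = {2,3} from by decide] at hB
    simp at hB
    exact le_trans hB (le_max_right _ _)
  · rw [show ({0,2} : Finset (Fin 4))ᶜ = {1,3} from by decide] at hB
    simp at hB
    exact le_trans hB (le_max_right _ _)
  · rw [show ({0,3} : Finset (Fin 4))ᶜ = {1,2} from by decide] at hB
    simp at hB
    exact le_trans hB (le_max_left _ _)
  · rw [show ({1,2} : Finset (Fin 4))ᶜ = {0,3} from by decide] at hB
    simp at hB
    exact le_trans hB (le_max_right _ _)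
  · rw [show ({1,3} : Finset (Fin 4))ᶜ = {0,2} from by decide] at hB
    simp at hB
    exact le_trans hB (le_max_left _ _)
  · rw [show ({2,3} : Finset (Fin 4))ᶜ = {0,1} from by decide] at hB
    simp at hB
    exact le_trans hB (le_max_left _ _)
  · exfalso
    obtain ⟨g, hg, hle⟩ := hefb (by decide)
    rw [show ({0,1,2} : Finset (Fin 4))ᶜ = {3} from by decide] at hle
    fin_cases hg <;> simp at hle <;> linarith
  · exfalso
    obtain ⟨g, hg, hle⟩ := hefb (by decide)
    rw [show ({0,1,3} : Finset (Fin 4))ᶜ = {2} from by decide] at hle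
    fin_cases hg <;> simp at hle <;> linarith
  · exfalso
    obtain ⟨g, hg, hle⟩ := hefb (by decide)
    rw [show ({0,2,3} : Finset (Fin 4))ᶜ = {1} from by decide] at hle
    fin_cases hg <;> simp at hle <;> linarith
  · exfalso
    obtain ⟨g, hg, hle⟩ := hefb (by decide)
    rw [show ({1,2,3} : Finset (Fin 4))ᶜ = {0} from by decide] at hle
    fin_cases hg <;> simp at hle <;> linarith
  · exfalso
    obtain ⟨g, hg, hle⟩ := hefb (by decide)
    rw [show ({0,1,2,3} : Finset (Fin 4))ᶜ = ∅ from by decide] at hle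
    fin_cases hg <;> simp at hle <;> linarith



/-- If `f : [0,∞) → [-∞,∞)` is increasing and differentiable on `(0,∞)`, and the additive
welfarist rule with `f` returns an EF1 allocation for every two-agent profile with
additive nonnegative utilities in which both agents can obtain nonzero utility, then
there exist `a > 0` and `b ∈ ℝ` with `f(x) = a·ln x + b` for all `x > 0` and `f(0) = −∞`;
i.e., the rule is the maximum Nash welfare rule. -/
theorem stmt_12 (f : ℝ → EReal)
    (hmono : StrictMonoOn f (Set.Ici 0))
    (hdiff : DifferentiableOn ℝ (fun x => (f x).toReal) (Set.Ioi 0))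
    (hEF1 : ∀ m : ℕ, ∀ u1 u2 : Fin m → ℝ,
      (∀ j, 0 ≤ u1 j) → (∀ j, 0 ≤ u2 j) →
      (∃ B : Finset (Fin m), 0 < ∑ j ∈ B, u1 j ∧ 0 < ∑ j ∈ Bᶜ, u2 j) →
      ∀ A1 : Finset (Fin m),
        (∀ B1 : Finset (Fin m),
          f (∑ j ∈ B1, u1 j) + f (∑ j ∈ B1ᶜ, u2 j)
            ≤ f (∑ j ∈ A1, u1 j) + f (∑ j ∈ A1ᶜ, u2 j)) →
        (((A1ᶜ : Finset (Fin m)) ≠ ∅ →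
            ∃ g ∈ A1ᶜ, ∑ j ∈ A1ᶜ \ {g}, u1 j ≤ ∑ j ∈ A1, u1 j) ∧
          (A1 ≠ ∅ → ∃ g ∈ A1, ∑ j ∈ A1 \ {g}, u2 j ≤ ∑ j ∈ A1ᶜ, u2 j))) :
    ∃ a : ℝ, 0 < a ∧ ∃ b : ℝ,
      (∀ x : ℝ, 0 < x → f x = ((a * Real.log x + b : ℝ) : EReal)) ∧ f 0 = ⊥ := by
  set g : ℝ → ℝ := fun x => (f x).toReal with hgdef
  have hgc : ContinuousOn g (Set.Ioi 0) := hdiff.continuousOn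
  have hft : ∀ x : ℝ, 0 ≤ x → f x ≠ ⊤ := by
    intro x hx
    exact ne_top_of_lt (hmono (Set.mem_Ici.mpr hx) (Set.mem_Ici.mpr (by linarith)) (lt_add_one x))
  have hfb : ∀ x : ℝ, 0 < x → f x ≠ ⊥ := by
    intro x hx
    exact (bot_le.trans_lt (hmono (Set.mem_Ici.mpr le_rfl) (Set.mem_Ici.mpr hx.le) hx)).ne'
  have hfc : ∀ x : ℝ, 0 < x → f x = ((g x : ℝ) : EReal) := by
    intro x hx
    exact (EReal.coe_toReal (hft x hx.le) (hfb x hx)).symm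
  have hgm : ∀ x y : ℝ, 0 < x → x < y → g x < g y := by
    intro x y hx hxy
    have h := hmono (Set.mem_Ici.mpr hx.le) (Set.mem_Ici.mpr (hx.trans hxy).le) hxy
    rw [hfc x hx, hfc y (hx.trans hxy)] at h
    exact_mod_cast h
  -- real versions of the key inequalities
  have k3' : ∀ w α y η : ℝ, 0 < α → α < w → 0 < η → η < y →
      g α + g (y + y) ≤ max (g w + g (y + η)) (g (w + α) + g y) := by
    intro w α y η hα hαw hη hηy
    have hw : 0 < w := hα.trans hαw
    have hy : 0 < y := hη.trans hηy
    have h := key3 f hEF1 w α y η hα hαw hη hηy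
    rw [hfc α hα, hfc (y + y) (by linarith), hfc w hw, hfc (y + η) (by linarith),
      hfc (w + α) (by linarith), hfc y hy, ← EReal.coe_add, ← EReal.coe_add,
      ← EReal.coe_add] at h
    rcases le_max_iff.mp h with h | h
    · exact le_max_of_le_left (EReal.coe_le_coe_iff.mp h)
    · exact le_max_of_le_right (EReal.coe_le_coe_iff.mp h)
  have k4' : ∀ w α y η : ℝ, 0 < α → α < w + w → 0 < η → η < y →
      g α + g (y + (y + y)) ≤ max (g (w + α) + g (y + y)) (g (w + w) + g (y + η)) := by
    intro w α y η hα hαw hη hηy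
    have hw : 0 < w := by linarith
    have hy : 0 < y := hη.trans hηy
    have h := key4 f hEF1 w α y η hα hαw hη hηy
    rw [hfc α hα, hfc (y + (y + y)) (by linarith), hfc (w + α) (by linarith),
      hfc (y + y) (by linarith), hfc (w + w) (by linarith), hfc (y + η) (by linarith),
      ← EReal.coe_add, ← EReal.coe_add, ← EReal.coe_add] at h
    rcases le_max_iff.mp h with h | h
    · exact le_max_of_le_left (EReal.coe_le_coe_iff.mp h)
    · exact le_max_of_le_right (EReal.coe_le_coe_iff.mp h)
  -- limit machinery
  have tgen : ∀ p s : ℝ, 0 < p → 0 < s →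
      Filter.Tendsto (fun t => g (p + s * t)) (nhdsWithin 0 (Set.Ioi 0)) (nhds (g p)) := by
    intro p s hp hs
    have h1 : Filter.Tendsto (fun t : ℝ => p + s * t) (nhdsWithin 0 (Set.Ioi 0))
        (nhdsWithin p (Set.Ioi 0)) := by
      apply tendsto_nhdsWithin_of_tendsto_nhds_of_eventually_within
      · have h2 : Filter.Tendsto (fun t : ℝ => p + s * t) (nhds 0) (nhds (p + s * 0)) :=
          (tendsto_const_nhds.add (tendsto_const_nhds.mul Filter.tendsto_id))
        have h3 : p + s * 0 = p := by ring
        rw [h3] at h2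
        exact h2.mono_left nhdsWithin_le_nhds
      · filter_upwards [self_mem_nhdsWithin] with t ht
        have h4 : (0:ℝ) < t := ht
        have h5 : 0 < s * t := mul_pos hs h4
        exact Set.mem_Ioi.mpr (by linarith)
    exact (hgc p (Set.mem_Ioi.mpr hp)).tendsto.comp h1
  -- doubling inequality
  have hd2 : ∀ α y : ℝ, 0 < α → 0 < y → g α + g (y + y) ≤ g (α + α) + g y := by
    intro α y hα hy
    have hev : ∀ᶠ t in nhdsWithin 0 (Set.Ioi 0), g α + g (y + y) ≤
        max (g (α + 1 * t) + g (y + 1 * t)) (g ((α + α) + 1 * t) + g y) := by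
      filter_upwards [Ioo_mem_nhdsGT_of_mem ⟨le_refl (0:ℝ), hy⟩] with t ht
      have h := k3' (α + t) α y t hα (by linarith [ht.1]) ht.1 ht.2
      have e3 : (α + t) + α = (α + α) + 1 * t := by ring
      have e1 : α + t = α + 1 * t := by ring
      have e2 : y + t = y + 1 * t := by ring
      rw [e3, e1, e2] at h
      exact h
    have T : Filter.Tendsto (fun t => max (g (α + 1 * t) + g (y + 1 * t))
        (g ((α + α) + 1 * t) + g y)) (nhdsWithin 0 (Set.Ioi 0))
        (nhds (max (g α + g y) (g (α + α) + g y))) :=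
      ((tgen α 1 hα one_pos).add (tgen y 1 hy one_pos)).max
        ((tgen (α + α) 1 (by linarith) one_pos).add tendsto_const_nhds)
    have hle := ge_of_tendsto T hev
    have h6 : g α ≤ g (α + α) := (hgm α (α + α) hα (by linarith)).le
    calc g α + g (y + y) ≤ _ := hle
      _ ≤ g (α + α) + g y := max_le (by linarith) le_rfl
  -- doubling constant
  obtain ⟨c, hc2⟩ : ∃ c : ℝ, ∀ x : ℝ, 0 < x → g (x + x) = g x + c := by
    refine ⟨g (1 + 1) - g 1, fun x hx => ?_⟩
    have h1 := hd2 x 1 hx one_pos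
    have h2 := hd2 1 x one_pos hx
    linarith
  have hcpos : 0 < c := by
    have h12 := hgm 1 (1 + 1) one_pos (by norm_num)
    rw [hc2 1 one_pos] at h12
    linarith
  -- tripling inequality
  have hd3 : ∀ α y : ℝ, 0 < α → 0 < y →
      g α + g (y + (y + y)) ≤ g (α / 2 + α) + g (y + y) := by
    intro α y hα hy
    have hev : ∀ᶠ t in nhdsWithin 0 (Set.Ioi 0), g α + g (y + (y + y)) ≤
        max (g ((α / 2 + α) + (1/2) * t) + g (y + y)) (g (α + 1 * t) + g (y + 1 * t)) := by
      filter_upwards [Ioo_mem_nhdsGT_of_mem ⟨le_refl (0:ℝ), hy⟩] with t ht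
      have h := k4' (α / 2 + t / 2) α y t hα (by linarith [ht.1]) ht.1 ht.2
      have e1 : (α / 2 + t / 2) + α = (α / 2 + α) + (1/2) * t := by ring
      have e2 : (α / 2 + t / 2) + (α / 2 + t / 2) = α + 1 * t := by ring
      have e3 : y + t = y + 1 * t := by ring
      rw [e1, e2, e3] at h
      exact h
    have T : Filter.Tendsto (fun t => max (g ((α / 2 + α) + (1/2) * t) + g (y + y))
        (g (α + 1 * t) + g (y + 1 * t))) (nhdsWithin 0 (Set.Ioi 0))
        (nhds (max (g (α / 2 + α) + g (y + y)) (g α + g y))) :=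
      ((tgen (α / 2 + α) (1/2) (by linarith) (by norm_num)).add tendsto_const_nhds).max
        ((tgen α 1 hα one_pos).add (tgen y 1 hy one_pos))
    have hle := ge_of_tendsto T hev
    rcases le_max_iff.mp hle with h | h
    · exact h
    · exfalso
      have := hgm y (y + (y + y)) hy (by linarith)
      linarith
  -- tripling constant
  obtain ⟨d, hc3⟩ : ∃ d : ℝ, ∀ x : ℝ, 0 < x → g (x + (x + x)) = g x + d := by
    have hmain : ∀ β y : ℝ, 0 < β → 0 < y →
        g (y + (y + y)) - g y ≤ g (β + (β + β)) - g β := by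
      intro β y hβ hy
      have h := hd3 (β + β) y (by linarith) hy
      have e : (β + β) / 2 + (β + β) = β + (β + β) := by ring
      rw [e, hc2 β hβ, hc2 y hy] at h
      linarith
    refine ⟨g (1 + (1 + 1)) - g 1, fun x hx => ?_⟩
    have h1 := hmain x 1 hx one_pos
    have h2 := hmain 1 x one_pos hx
    linarith
  have hdpos : 0 < d := by
    have h13 := hgm 1 (1 + (1 + 1)) one_pos (by norm_num)
    rw [hc3 1 one_pos] at h13
    linarith
  -- integer powers
  have h2z : ∀ (k : ℤ) (x : ℝ), 0 < x → g ((2:ℝ) ^ k * x) = g x + k * c := by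
    intro k
    induction k using Int.induction_on with
    | zero => intro x hx; norm_num
    | succ n ih =>
        intro x hx
        have hpos : (0:ℝ) < (2:ℝ) ^ (n:ℤ) * x := mul_pos (zpow_pos (by norm_num) _) hx
        have e : (2:ℝ) ^ ((n:ℤ) + 1) * x = (2:ℝ) ^ (n:ℤ) * x + (2:ℝ) ^ (n:ℤ) * x := by
          rw [zpow_add_one₀ (by norm_num : (2:ℝ) ≠ 0)]; ring
        rw [e, hc2 _ hpos, ih x hx]
        push_cast; ring
    | pred n ih =>
        intro x hx
        have hpos : (0:ℝ) < (2:ℝ) ^ (-(n:ℤ) - 1) * x := mul_pos (zpow_pos (by norm_num) _) hx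
        have e : (2:ℝ) ^ (-(n:ℤ)) * x = (2:ℝ) ^ (-(n:ℤ) - 1) * x + (2:ℝ) ^ (-(n:ℤ) - 1) * x := by
          rw [show -(n:ℤ) = (-(n:ℤ) - 1) + 1 by ring, zpow_add_one₀ (by norm_num : (2:ℝ) ≠ 0)]
          ring
        have h7 := hc2 _ hpos
        rw [← e, ih x hx] at h7
        push_cast at h7 ⊢
        linarith
  have h3z : ∀ (l : ℤ) (x : ℝ), 0 < x → g ((3:ℝ) ^ l * x) = g x + l * d := by
    intro l
    induction l using Int.induction_on with
    | zero => intro x hx; norm_num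
    | succ n ih =>
        intro x hx
        have hpos : (0:ℝ) < (3:ℝ) ^ (n:ℤ) * x := mul_pos (zpow_pos (by norm_num) _) hx
        have e : (3:ℝ) ^ ((n:ℤ) + 1) * x =
            (3:ℝ) ^ (n:ℤ) * x + ((3:ℝ) ^ (n:ℤ) * x + (3:ℝ) ^ (n:ℤ) * x) := by
          rw [zpow_add_one₀ (by norm_num : (3:ℝ) ≠ 0)]; ring
        rw [e, hc3 _ hpos, ih x hx]
        push_cast; ring
    | pred n ih =>
        intro x hx
        have hpos : (0:ℝ) < (3:ℝ) ^ (-(n:ℤ) - 1) * x := mul_pos (zpow_pos (by norm_num) _) hx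
        have e : (3:ℝ) ^ (-(n:ℤ)) * x = (3:ℝ) ^ (-(n:ℤ) - 1) * x +
            ((3:ℝ) ^ (-(n:ℤ) - 1) * x + (3:ℝ) ^ (-(n:ℤ) - 1) * x) := by
          rw [show -(n:ℤ) = (-(n:ℤ) - 1) + 1 by ring, zpow_add_one₀ (by norm_num : (3:ℝ) ≠ 0)]
          ring
        have h7 := hc3 _ hpos
        rw [← e, ih x hx] at h7
        push_cast at h7 ⊢
        linarith
  have hlog2 : 0 < Real.log 2 := Real.log_pos (by norm_num)
  have hlog3 : 0 < Real.log 3 := Real.log_pos (by norm_num)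
  -- positivity transfer
  have hprop : ∀ k l : ℤ, 0 < k * Real.log 2 + l * Real.log 3 → 0 < k * c + l * d := by
    intro k l hkl
    have h3p : (0:ℝ) < (3:ℝ) ^ l * 1 := mul_pos (zpow_pos (by norm_num) _) one_pos
    have hval : g ((2:ℝ) ^ k * ((3:ℝ) ^ l * 1)) = g 1 + (k * c + l * d) := by
      rw [h2z k _ h3p, h3z l 1 one_pos]; ring
    have hgt1 : (1:ℝ) < (2:ℝ) ^ k * ((3:ℝ) ^ l * 1) := by
      have e2 : (2:ℝ) ^ k = Real.exp ((k:ℝ) * Real.log 2) := by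
        rw [← Real.rpow_intCast 2 k, Real.rpow_def_of_pos (by norm_num : (0:ℝ) < 2)]
        ring_nf
      have e3 : (3:ℝ) ^ l = Real.exp ((l:ℝ) * Real.log 3) := by
        rw [← Real.rpow_intCast 3 l, Real.rpow_def_of_pos (by norm_num : (0:ℝ) < 3)]
        ring_nf
      rw [e2, e3, mul_one, ← Real.exp_add]
      calc (1:ℝ) = Real.exp 0 := Real.exp_zero.symm
        _ < _ := Real.exp_lt_exp.mpr hkl
    have h8 := hgm 1 _ one_pos hgt1
    rw [hval] at h8
    linarith
  -- proportionality
  have hlin : d * Real.log 2 = c * Real.log 3 := by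
    by_contra hne
    rcases lt_or_gt_of_ne hne with hlt | hgt
    · -- d log2 < c log3 : log2/log3 < c/d
      obtain ⟨q, hq1, hq2⟩ := exists_rat_btwn
        (show Real.log 2 / Real.log 3 < c / d by
          rw [div_lt_div_iff₀ hlog3 hdpos]; linarith)
      have hq0 : 0 < (q:ℝ) := lt_trans (div_pos hlog2 hlog3) hq1
      have hqnum : 0 < q.num := Rat.num_pos.mpr (by exact_mod_cast hq0)
      have hqden : 0 < (q.den : ℤ) := by exact_mod_cast q.den_pos
      have hcast : (q:ℝ) = (q.num : ℝ) / (q.den : ℝ) := by rw [Rat.cast_def]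
      rw [hcast] at hq1 hq2
      have hdenR : (0:ℝ) < (q.den : ℝ) := by exact_mod_cast q.den_pos
      have h1 : Real.log 2 * (q.den : ℝ) < (q.num : ℝ) * Real.log 3 := by
        rw [div_lt_div_iff₀ hlog3 hdenR] at hq1; linarith
      have h2 : (q.num : ℝ) * d < c * (q.den : ℝ) := by
        rw [div_lt_div_iff₀ hdenR hdpos] at hq2; linarith
      have h9 := hprop (-(q.den : ℤ)) q.num (by push_cast; linarith)
      push_cast at h9
      linarith
    · -- c log3 < d log2 : c/d < log2/log3
      obtain ⟨q, hq1, hq2⟩ := exists_rat_btwn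
        (show c / d < Real.log 2 / Real.log 3 by
          rw [div_lt_div_iff₀ hdpos hlog3]; linarith)
      have hq0 : 0 < (q:ℝ) := lt_trans (div_pos hcpos hdpos) hq1
      have hqnum : 0 < q.num := Rat.num_pos.mpr (by exact_mod_cast hq0)
      have hqden : 0 < (q.den : ℤ) := by exact_mod_cast q.den_pos
      have hcast : (q:ℝ) = (q.num : ℝ) / (q.den : ℝ) := by rw [Rat.cast_def]
      rw [hcast] at hq1 hq2
      have hdenR : (0:ℝ) < (q.den : ℝ) := by exact_mod_cast q.den_pos
      have h1 : c * (q.den : ℝ) < (q.num : ℝ) * d := by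
        rw [div_lt_div_iff₀ hdpos hdenR] at hq1; linarith
      have h2 : (q.num : ℝ) * Real.log 3 < Real.log 2 * (q.den : ℝ) := by
        rw [div_lt_div_iff₀ hdenR hlog3] at hq2; linarith
      have h9 := hprop (q.den : ℤ) (-q.num) (by push_cast; linarith)
      push_cast at h9
      linarith
  set a : ℝ := c / Real.log 2 with hadef
  have ha : 0 < a := div_pos hcpos hlog2
  have ha2 : a * Real.log 2 = c := div_mul_cancel₀ c hlog2.ne'
  have ha3 : a * Real.log 3 = d := by
    rw [hadef, div_mul_eq_mul_div, eq_comm, eq_div_iff hlog2.ne']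
    linarith [hlin]
  set H : ℝ → ℝ := fun t => g (Real.exp t) - a * t with hHdef
  have Hcont : Continuous H := by
    apply Continuous.sub
    · exact hgc.comp_continuous Real.continuous_exp (fun t => Set.mem_Ioi.mpr (Real.exp_pos t))
    · exact continuous_const.mul continuous_id
  have Hinv2 : ∀ t : ℝ, H (t + Real.log 2) = H t := by
    intro t
    have e : Real.exp (t + Real.log 2) = Real.exp t + Real.exp t := by
      rw [Real.exp_add, Real.exp_log (by norm_num : (0:ℝ) < 2)]; ring
    simp only [hHdef, e, hc2 (Real.exp t) (Real.exp_pos t)]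
    linarith [ha2]
  have Hinv3 : ∀ t : ℝ, H (t + Real.log 3) = H t := by
    intro t
    have e : Real.exp (t + Real.log 3) = Real.exp t + (Real.exp t + Real.exp t) := by
      rw [Real.exp_add, Real.exp_log (by norm_num : (0:ℝ) < 3)]; ring
    simp only [hHdef, e, hc3 (Real.exp t) (Real.exp_pos t)]
    linarith [ha3]
  have HinvS : ∀ r ∈ AddSubgroup.closure ({Real.log 2, Real.log 3} : Set ℝ),
      ∀ t : ℝ, H (t + r) = H t := by
    intro r hr
    induction hr using AddSubgroup.closure_induction with
    | mem x hx =>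
        rcases hx with hx | hx
        · rw [hx]; exact Hinv2
        · rw [Set.mem_singleton_iff] at hx; rw [hx]; exact Hinv3
    | zero => intro t; rw [add_zero]
    | add x y hx hy ihx ihy =>
        intro t
        have e : t + (x + y) = (t + y) + x := by ring
        rw [e, ihx (t + y), ihy t]
    | neg x hx ihx =>
        intro t
        have e : t = (t + -x) + x := by ring
        calc H (t + -x) = H ((t + -x) + x) := (ihx (t + -x)).symm
          _ = H t := by rw [← e]
  have hdense : Dense ((AddSubgroup.closure ({Real.log 2, Real.log 3} : Set ℝ) : AddSubgroup ℝ) :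
      Set ℝ) := by
    rcases AddSubgroup.dense_or_cyclic (AddSubgroup.closure {Real.log 2, Real.log 3}) with h | ⟨x, hx⟩
    · exact h
    · exfalso
      have h2m : Real.log 2 ∈ AddSubgroup.closure ({Real.log 2, Real.log 3} : Set ℝ) :=
        AddSubgroup.subset_closure (by simp)
      have h3m : Real.log 3 ∈ AddSubgroup.closure ({Real.log 2, Real.log 3} : Set ℝ) :=
        AddSubgroup.subset_closure (by simp)
      rw [hx] at h2m h3m
      obtain ⟨z, hz⟩ := AddSubgroup.mem_closure_singleton.mp h2m
      obtain ⟨w, hw⟩ := AddSubgroup.mem_closure_singleton.mp h3m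
      rw [zsmul_eq_mul] at hz hw
      -- (z:ℝ) * x = log 2, (w:ℝ) * x = log 3
      have hkey : (w:ℝ) * Real.log 2 = (z:ℝ) * Real.log 3 := by
        rw [← hz, ← hw]; ring
      -- find positive naturals p q with p * log 2 = q * log 3
      obtain ⟨p, q, hp, hq, hpq⟩ : ∃ p q : ℕ, 0 < p ∧ 0 < q ∧
          (p:ℝ) * Real.log 2 = (q:ℝ) * Real.log 3 := by
        have hxne : x ≠ 0 := by
          intro h0; rw [h0, mul_zero] at hz; linarith
        rcases lt_or_gt_of_ne hxne with hxneg | hxpos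
        · -- x < 0 : z < 0 and w < 0
          have hzneg : (z:ℝ) < 0 := by
            rcases mul_pos_iff.mp (hz ▸ hlog2) with ⟨h1, _⟩ | ⟨h1, _⟩
            · linarith
            · exact h1
          have hwneg : (w:ℝ) < 0 := by
            rcases mul_pos_iff.mp (hw ▸ hlog3) with ⟨h1, _⟩ | ⟨h1, _⟩
            · linarith
            · exact h1
          refine ⟨(-w).toNat, (-z).toNat, ?_, ?_, ?_⟩
          · have : 0 < -w := by exact_mod_cast neg_pos.mpr (by exact_mod_cast hwneg)
            omega
          · have : 0 < -z := by exact_mod_cast neg_pos.mpr (by exact_mod_cast hzneg)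
            omega
          · have hw' : ((-w).toNat : ℝ) = -(w:ℝ) := by
              have : 0 ≤ -w := by
                have : (0:ℝ) ≤ -(w:ℝ) := by linarith
                exact_mod_cast this
              exact_mod_cast congrArg (fun i : ℤ => (i : ℝ)) (Int.toNat_of_nonneg this)
            have hz' : ((-z).toNat : ℝ) = -(z:ℝ) := by
              have : 0 ≤ -z := by
                have : (0:ℝ) ≤ -(z:ℝ) := by linarith
                exact_mod_cast this
              exact_mod_cast congrArg (fun i : ℤ => (i : ℝ)) (Int.toNat_of_nonneg this)
            rw [hw', hz']; linarith [hkey]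
        · -- x > 0 : z > 0 and w > 0
          have hzpos : (0:ℝ) < (z:ℝ) := by
            rcases mul_pos_iff.mp (hz ▸ hlog2) with ⟨h1, _⟩ | ⟨_, h2⟩
            · exact h1
            · linarith
          have hwpos : (0:ℝ) < (w:ℝ) := by
            rcases mul_pos_iff.mp (hw ▸ hlog3) with ⟨h1, _⟩ | ⟨_, h2⟩
            · exact h1
            · linarith
          refine ⟨w.toNat, z.toNat, ?_, ?_, ?_⟩
          · have : 0 < w := by exact_mod_cast hwpos
            omega
          · have : 0 < z := by exact_mod_cast hzpos
            omega
          · have hw' : (w.toNat : ℝ) = (w:ℝ) := by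
              have : 0 ≤ w := by exact_mod_cast hwpos.le
              exact_mod_cast congrArg (fun i : ℤ => (i : ℝ)) (Int.toNat_of_nonneg this)
            have hz' : (z.toNat : ℝ) = (z:ℝ) := by
              have : 0 ≤ z := by exact_mod_cast hzpos.le
              exact_mod_cast congrArg (fun i : ℤ => (i : ℝ)) (Int.toNat_of_nonneg this)
            rw [hw', hz']; linarith [hkey]
      -- from p log2 = q log3 derive 2^p = 3^q
      have hlogeq : Real.log ((2:ℝ) ^ p) = Real.log ((3:ℝ) ^ q) := by
        rw [Real.log_pow, Real.log_pow]; exact_mod_cast hpq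
      have hpow : (2:ℝ) ^ p = (3:ℝ) ^ q := by
        have h2p : (0:ℝ) < 2 ^ p := by positivity
        have h3q : (0:ℝ) < 3 ^ q := by positivity
        calc (2:ℝ) ^ p = Real.exp (Real.log ((2:ℝ) ^ p)) := (Real.exp_log h2p).symm
          _ = Real.exp (Real.log ((3:ℝ) ^ q)) := by rw [hlogeq]
          _ = (3:ℝ) ^ q := Real.exp_log h3q
      have hnat : (2:ℕ) ^ p = 3 ^ q := by exact_mod_cast hpow
      have hdvd : (3:ℕ) ∣ 2 ^ p := by
        rw [hnat]; exact dvd_pow_self 3 hq.ne'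
      have := (Nat.prime_three).dvd_of_dvd_pow hdvd
      norm_num at this
  have Hconst : ∀ s : ℝ, H s = H 0 := by
    have heq : Set.EqOn H (fun _ => H 0)
        ((AddSubgroup.closure ({Real.log 2, Real.log 3} : Set ℝ) : AddSubgroup ℝ) : Set ℝ) := by
      intro r hr
      have h10 := HinvS r hr 0
      rw [zero_add] at h10
      exact h10
    have h11 := Continuous.ext_on hdense Hcont continuous_const heq
    intro s
    exact congrFun h11 s
  have hform : ∀ x : ℝ, 0 < x → g x = a * Real.log x + H 0 := by
    intro x hx
    have h12 := Hconst (Real.log x)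
    rw [hHdef] at h12
    simp only [Real.exp_zero, mul_zero, sub_zero] at h12
    rw [Real.exp_log hx] at h12
    rw [show H 0 = g 1 from by rw [hHdef]; simp]
    linarith
  refine ⟨a, ha, H 0, fun x hx => ?_, ?_⟩
  · rw [hfc x hx, hform x hx]
  · by_contra h0
    have hnetop : f 0 ≠ ⊤ :=
      ne_top_of_lt (hmono (Set.mem_Ici.mpr le_rfl) (Set.mem_Ici.mpr zero_le_one) zero_lt_one)
    have hr : f 0 = (((f 0).toReal : ℝ) : EReal) := (EReal.coe_toReal hnetop h0).symm
    set r : ℝ := (f 0).toReal with hrdef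
    have hlt : ∀ x : ℝ, 0 < x → r < a * Real.log x + H 0 := by
      intro x hx
      have h13 := hmono (Set.mem_Ici.mpr le_rfl) (Set.mem_Ici.mpr hx.le) hx
      rw [hr, hfc x hx, hform x hx] at h13
      exact_mod_cast h13
    have h14 := hlt (Real.exp ((r - H 0 - 1) / a)) (Real.exp_pos _)
    rw [Real.log_exp] at h14
    have h15 : a * ((r - H 0 - 1) / a) = r - H 0 - 1 := mul_div_cancel₀ _ ha.ne'
    linarith
end

section
/- For two agents with additive utilities, and f(x) = ln x, any allocation maximizing ln(u_1(A_1)) + ln(u_2(A_2)) (assuming some allocation gives both agents positive utility) is EF1. -/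
lemma mnw_aux {m : ℕ} (u v : Fin m → ℝ) (hu : ∀ j, 0 ≤ u j) (hv : ∀ j, 0 ≤ v j)
    (A B : Finset (Fin m)) (hd : Disjoint A B)
    (hApos : 0 < ∑ j ∈ A, u j) (hBpos : 0 < ∑ j ∈ B, v j)
    (hmax : ∀ S ⊆ B, 0 < ∑ j ∈ A ∪ S, u j → 0 < ∑ j ∈ B \ S, v j →
      (∑ j ∈ A ∪ S, u j) * (∑ j ∈ B \ S, v j) ≤ (∑ j ∈ A, u j) * (∑ j ∈ B, v j))
    (hB : B ≠ ∅) : ∃ g ∈ B, ∑ j ∈ B \ {g}, u j ≤ ∑ j ∈ A, u j := by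
  by_cases hall : ∀ h ∈ B, u h = 0
  · obtain ⟨g, hg⟩ := Finset.nonempty_iff_ne_empty.2 hB
    refine ⟨g, hg, ?_⟩
    have : ∑ j ∈ B \ {g}, u j = 0 :=
      Finset.sum_eq_zero fun j hj => hall j (Finset.mem_sdiff.1 hj).1
    linarith
  push_neg at hall
  obtain ⟨h0, hh0B, hh0⟩ := hall
  have hS0 : (B.filter (fun h => 0 < u h)).Nonempty :=
    ⟨h0, Finset.mem_filter.2 ⟨hh0B, lt_of_le_of_ne (hu h0) (Ne.symm hh0)⟩⟩
  obtain ⟨g, hgS, hgmin⟩ := Finset.exists_min_image _ (fun h => v h / u h) hS0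
  obtain ⟨hgB, hug⟩ := Finset.mem_filter.1 hgS
  refine ⟨g, hgB, ?_⟩
  have hsplitv : ∑ j ∈ B \ {g}, v j + v g = ∑ j ∈ B, v j := by
    rw [← Finset.erase_eq]; exact Finset.sum_erase_add _ _ hgB
  have hsplitu : ∑ j ∈ B \ {g}, u j + u g = ∑ j ∈ B, u j := by
    rw [← Finset.erase_eq]; exact Finset.sum_erase_add _ _ hgB
  have hdg : Disjoint A {g} := Finset.disjoint_left.2 fun x hx hx' => by
    exact Finset.disjoint_left.1 hd hx (by simpa using (Finset.mem_singleton.1 hx') ▸ hgB)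
  rcases le_or_gt (∑ j ∈ B \ {g}, v j) 0 with hz | hz
  · -- v vanishes on B \ {g}
    have hvz : ∑ j ∈ B \ {g}, v j = 0 :=
      le_antisymm hz (Finset.sum_nonneg fun j _ => hv j)
    have hvg : v g = ∑ j ∈ B, v j := by linarith
    have hdS : Disjoint A (B \ {g}) := hd.mono_right (Finset.sdiff_subset)
    have key := hmax (B \ {g}) Finset.sdiff_subset
      (by rw [Finset.sum_union hdS]
          have : 0 ≤ ∑ j ∈ B \ {g}, u j := Finset.sum_nonneg fun j _ => hu j
          linarith)
      (by
        have : B \ (B \ {g}) = {g} := by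
          rw [Finset.sdiff_sdiff_self_left]
          exact Finset.inter_eq_right.2 (Finset.singleton_subset_iff.2 hgB)
        rw [this, Finset.sum_singleton, hvg]; exact hBpos)
    have hBdiff : B \ (B \ {g}) = {g} := by
      rw [Finset.sdiff_sdiff_self_left]
      exact Finset.inter_eq_right.2 (Finset.singleton_subset_iff.2 hgB)
    rw [Finset.sum_union hdS, hBdiff, Finset.sum_singleton, hvg] at key
    have hvB : 0 < ∑ j ∈ B, v j := hBpos
    nlinarith [Finset.sum_nonneg (fun j (_ : j ∈ B \ {g}) => hu j)]
  · -- main case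
    have key := hmax {g} (Finset.singleton_subset_iff.2 hgB)
      (by rw [Finset.sum_union hdg, Finset.sum_singleton]; linarith [hu g])
      hz
    rw [Finset.sum_union hdg, Finset.sum_singleton] at key
    -- key : (∑A u + u g) * (∑_{B\{g}} v) ≤ ∑A u * ∑B v
    have key2 : u g * ∑ j ∈ B \ {g}, v j ≤ (∑ j ∈ A, u j) * v g := by nlinarith
    have hmin : ∀ h ∈ B \ {g}, v g * u h ≤ v h * u g := by
      intro h hh
      rcases eq_or_lt_of_le (hu h) with he | hpos
      · rw [← he, mul_zero]; exact mul_nonneg (hv h) (le_of_lt hug)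
      · have := hgmin h (Finset.mem_filter.2 ⟨(Finset.mem_sdiff.1 hh).1, hpos⟩)
        rw [div_le_div_iff₀ hug hpos] at this
        linarith
    have hsum : v g * ∑ j ∈ B \ {g}, u j ≤ u g * ∑ j ∈ B \ {g}, v j := by
      rw [Finset.mul_sum, Finset.mul_sum]
      refine Finset.sum_le_sum fun h hh => ?_
      have := hmin h hh; linarith
    have hvg : 0 < v g := by
      rcases eq_or_lt_of_le (hv g) with he | h; swap; · exact h
      exfalso; rw [← he] at key2; nlinarith
    have := le_trans hsum key2
    exact (mul_le_mul_iff_of_pos_left hvg).1 (by linarith)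

lemma log_prod_ineq {a b c d : ℝ} (ha : 0 < a) (hb : 0 < b) (hc : 0 < c) (hd : 0 < d)
    (h : Real.log a + Real.log b ≤ Real.log c + Real.log d) : a * b ≤ c * d := by
  rw [← Real.log_mul ha.ne' hb.ne', ← Real.log_mul hc.ne' hd.ne'] at h
  exact (Real.log_le_log_iff (mul_pos ha hb) (mul_pos hc hd)).1 h

/-- For two agents with additive nonnegative utilities, any allocation maximizing
`ln(u_1(A_1)) + ln(u_2(A_2))` over the allocations giving both agents positive utility
(assuming such an allocation exists) is EF1. -/
theorem stmt_13 (m : ℕ) (u1 u2 : Fin m → ℝ)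
    (hu1 : ∀ j, 0 ≤ u1 j) (hu2 : ∀ j, 0 ≤ u2 j)
    (A1 : Finset (Fin m))
    (hA1pos : 0 < ∑ j ∈ A1, u1 j) (hA2pos : 0 < ∑ j ∈ A1ᶜ, u2 j)
    (hmax : ∀ B1 : Finset (Fin m),
      0 < ∑ j ∈ B1, u1 j → 0 < ∑ j ∈ B1ᶜ, u2 j →
      Real.log (∑ j ∈ B1, u1 j) + Real.log (∑ j ∈ B1ᶜ, u2 j)
        ≤ Real.log (∑ j ∈ A1, u1 j) + Real.log (∑ j ∈ A1ᶜ, u2 j)) :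
    (((A1ᶜ : Finset (Fin m)) ≠ ∅ →
        ∃ g ∈ A1ᶜ, ∑ j ∈ A1ᶜ \ {g}, u1 j ≤ ∑ j ∈ A1, u1 j) ∧
      (A1 ≠ ∅ → ∃ g ∈ A1, ∑ j ∈ A1 \ {g}, u2 j ≤ ∑ j ∈ A1ᶜ, u2 j)) := by
  constructor
  · intro hne
    refine mnw_aux u1 u2 hu1 hu2 A1 A1ᶜ (disjoint_compl_right) hA1pos hA2pos ?_ hne
    intro S hS hpos1 hpos2
    have hcompl : (A1 ∪ S)ᶜ = A1ᶜ \ S := by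
      ext x; by_cases hx : x ∈ S <;> simp [Finset.mem_sdiff, Finset.mem_compl, hx] <;> tauto
    have := hmax (A1 ∪ S) hpos1 (by rw [hcompl]; exact hpos2)
    rw [hcompl] at this
    exact log_prod_ineq hpos1 hpos2 hA1pos hA2pos this
  · intro hne
    refine mnw_aux u2 u1 hu2 hu1 A1ᶜ A1 (disjoint_compl_left) hA2pos hA1pos ?_ hne
    intro S hS hpos2 hpos1
    have hcompl : (A1 \ S)ᶜ = A1ᶜ ∪ S := by
      ext x; by_cases hx : x ∈ S <;> simp [Finset.mem_sdiff, Finset.mem_compl, hx] <;> tauto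
    have := hmax (A1 \ S) hpos1 (by rw [hcompl]; exact hpos2)
    rw [hcompl] at this
    have h2 := log_prod_ineq hpos1 hpos2 hA1pos hA2pos this
    calc (∑ j ∈ A1ᶜ ∪ S, u2 j) * ∑ j ∈ A1 \ S, u1 j
        = (∑ j ∈ A1 \ S, u1 j) * ∑ j ∈ A1ᶜ ∪ S, u2 j := by ring
      _ ≤ (∑ j ∈ A1, u1 j) * ∑ j ∈ A1ᶜ, u2 j := h2
      _ = (∑ j ∈ A1ᶜ, u2 j) * ∑ j ∈ A1, u1 j := by ring
end

section
/- Suppose (c_k) is a sequence of reals such that for some differentiable function f : (0,∞) → ℝ and all x > 0 and all k ≥ 1, f((1+1/k)x) − f(x) = c_k. Then the sequence (k·c_k) converges, and its limit equals x·f'(x) for every x > 0. -/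
/-- If `f` is differentiable on `(0,∞)` and `f((1+1/k)x) − f(x) = c_k` for all `x > 0`
and all `k ≥ 1`, then the sequence `(k·c_k)` converges, with limit `x·f'(x)` for every
`x > 0`. -/
theorem stmt_16 (f : ℝ → ℝ) (c : ℕ → ℝ)
    (hdiff : ∀ x ∈ Set.Ioi (0 : ℝ), DifferentiableAt ℝ f x)
    (hc : ∀ k : ℕ, 1 ≤ k → ∀ x ∈ Set.Ioi (0 : ℝ),
      f ((1 + 1 / (k : ℝ)) * x) - f x = c k) :
    ∀ x : ℝ, 0 < x →
      Filter.Tendsto (fun k : ℕ => (k : ℝ) * c k) Filter.atTop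
        (nhds (x * deriv f x)) := by
  intro x hx
  have hx' : x ∈ Set.Ioi (0 : ℝ) := hx
  have hder : HasDerivAt f (deriv f x) x := (hdiff x hx').hasDerivAt
  have hslope := hasDerivAt_iff_tendsto_slope.mp hder
  set y : ℕ → ℝ := fun k => (1 + 1 / (k : ℝ)) * x with hy
  have hyx : Filter.Tendsto y Filter.atTop (nhds x) := by
    have h1 : Filter.Tendsto (fun k : ℕ => 1 + 1 / (k : ℝ)) Filter.atTop (nhds 1) := by
      have := (tendsto_one_div_atTop_nhds_zero_nat : Filter.Tendsto (fun n : ℕ => 1 / (n : ℝ)) Filter.atTop (nhds 0))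
      simpa using (tendsto_const_nhds (x := (1:ℝ)) (f := Filter.atTop (α := ℕ))).add this
    simpa [hy, one_div] using h1.mul_const x
  have hyne : ∀ᶠ k : ℕ in Filter.atTop, y k ≠ x := by
    filter_upwards [Filter.eventually_ge_atTop 1] with k hk
    have hk0 : (0:ℝ) < (k:ℝ) := by exact_mod_cast hk
    have : y k - x = x / k := by show (1 + 1 / (k:ℝ)) * x - x = x / k; field_simp; ring
    intro h
    rw [h, sub_self] at this
    exact (div_pos hx hk0).ne this
  have hynw : Filter.Tendsto y Filter.atTop (nhdsWithin x {x}ᶜ) :=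
    tendsto_nhdsWithin_of_tendsto_nhds_of_eventually_within _ hyx hyne
  have hcomp : Filter.Tendsto (fun k => slope f x (y k)) Filter.atTop (nhds (deriv f x)) :=
    hslope.comp hynw
  have hmul := hcomp.const_mul x
  refine hmul.congr' ?_
  filter_upwards [Filter.eventually_ge_atTop 1] with k hk
  have hk0 : (0:ℝ) < (k:ℝ) := by exact_mod_cast hk
  have hck := hc k hk x hx'
  have hyk : y k - x = x / k := by show (1 + 1 / (k:ℝ)) * x - x = x / k; field_simp; ring
  rw [slope_def_field, hck, show (1 + 1 / (k:ℝ)) * x - x = x / k by field_simp; ring]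
  field_simp
end

section
/- Let f : (0,∞) → ℝ be increasing and differentiable, and suppose for every positive integer k, the function x ↦ f((k+1)x) − f(kx) is constant on (0,∞). Then f' is strictly positive on (0,∞) or f is constant; in the non-constant case, f'(x) > 0 for all x > 0. -/
/-- If `f` is increasing and differentiable on `(0,∞)` and for every positive integer `k`
the function `x ↦ f((k+1)x) − f(kx)` is constant on `(0,∞)`, then either `f' > 0` on
`(0,∞)` or `f` is constant on `(0,∞)`. -/
theorem stmt_17 (f : ℝ → ℝ)
    (hdiff : ∀ x ∈ Set.Ioi (0 : ℝ), DifferentiableAt ℝ f x)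
    (hmono : MonotoneOn f (Set.Ioi 0))
    (hconst : ∀ k : ℕ, 1 ≤ k → ∀ x ∈ Set.Ioi (0 : ℝ), ∀ y ∈ Set.Ioi (0 : ℝ),
      f (((k : ℝ) + 1) * x) - f ((k : ℝ) * x) = f (((k : ℝ) + 1) * y) - f ((k : ℝ) * y)) :
    (∀ x ∈ Set.Ioi (0 : ℝ), 0 < deriv f x) ∨
      (∀ x ∈ Set.Ioi (0 : ℝ), ∀ y ∈ Set.Ioi (0 : ℝ), f x = f y) := by
  set C : ℕ → ℝ := fun k => f k - f 1 with hCdef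
  -- step 1 : f (n * x) = f x + C n for n ≥ 1, x > 0
  have lem1 : ∀ n : ℕ, ∀ x : ℝ, 0 < x → f ((n + 1 : ℕ) * x) = f x + C (n + 1) := by
    intro n
    induction n with
    | zero => intro x hx; simp [hCdef]
    | succ m ih =>
      intro x hx
      have hk := hconst (m + 1) (by omega) x (Set.mem_Ioi.mpr hx) 1 (Set.mem_Ioi.mpr one_pos)
      have h1 : ((m + 1 : ℕ) : ℝ) + 1 = ((m + 2 : ℕ) : ℝ) := by push_cast; ring
      rw [h1, mul_one, mul_one] at hk
      have := ih x hx
      have h2 : f ((m + 2 : ℕ) * x) = f ((m + 1 : ℕ) * x) + (f ((m + 2 : ℕ) : ℝ) - f ((m + 1 : ℕ) : ℝ)) := by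
        linarith
      rw [h2, this]
      simp only [hCdef]
      push_cast
      ring
  have lem1' : ∀ n : ℕ, 1 ≤ n → ∀ x : ℝ, 0 < x → f ((n : ℕ) * x) = f x + C n := by
    intro n hn x hx
    obtain ⟨m, rfl⟩ := Nat.exists_eq_add_of_le hn
    have := lem1 m x hx
    rw [add_comm 1 m] at *
    exact this
  have natpos : ∀ n : ℕ, 1 ≤ n → (0 : ℝ) < (n : ℝ) := by
    intro n hn; exact_mod_cast Nat.lt_of_lt_of_le Nat.zero_lt_one hn
  -- multiplicativity
  have hCmul : ∀ m n : ℕ, 1 ≤ m → 1 ≤ n → C (m * n) = C m + C n := by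
    intro m n hm hn
    have h1 := lem1' m hm (n : ℝ) (natpos n hn)
    have h2 : f ((m * n : ℕ) : ℝ) = f ((m : ℝ) * (n : ℝ)) := by push_cast; ring_nf
    simp only [hCdef]
    rw [h2, h1]
    simp only [hCdef]
    ring
  have hCpow : ∀ m j : ℕ, 1 ≤ m → C (m ^ j) = j * C m := by
    intro m j hm
    induction j with
    | zero => simp [hCdef]
    | succ i ih =>
      have hpow : 1 ≤ m ^ i := Nat.one_le_pow _ _ (by omega)
      rw [pow_succ, hCmul (m ^ i) m hpow hm, ih]
      push_cast; ring
  -- key inequality : n * (C (n+1) - C n) ≥ C 2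
  have hkey : ∀ n : ℕ, 1 ≤ n → C 2 ≤ n * (C (n + 1) - C n) := by
    intro n hn
    have hnR : (0 : ℝ) < (n : ℝ) := natpos n hn
    -- (n+1)^n ≥ 2 * n^n in ℝ
    have hineq : (2 : ℝ) * (n : ℝ) ^ n ≤ ((n : ℝ) + 1) ^ n := by
      have h1 : (1 : ℝ) + (n : ℝ) * (1 / n) ≤ (1 + 1 / n) ^ n := by
        apply one_add_mul_le_pow
        have : (0:ℝ) ≤ 1 / (n:ℝ) := by positivity
        linarith
      have h2 : (1 : ℝ) + (n : ℝ) * (1 / n) = 2 := by field_simp; norm_num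
      rw [h2] at h1
      calc (2 : ℝ) * (n : ℝ) ^ n ≤ (1 + 1 / n) ^ n * (n : ℝ) ^ n := by
            apply mul_le_mul_of_nonneg_right h1 (by positivity)
        _ = ((1 + 1 / n) * n) ^ n := by rw [mul_pow]
        _ = ((n : ℝ) + 1) ^ n := by congr 1; field_simp
    -- f monotone comparison
    have hmem1 : ((2 * n ^ n : ℕ) : ℝ) ∈ Set.Ioi (0 : ℝ) := by
      simp only [Set.mem_Ioi]; positivity
    have hmem2 : (((n + 1) ^ n : ℕ) : ℝ) ∈ Set.Ioi (0 : ℝ) := by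
      simp only [Set.mem_Ioi]; positivity
    have hle : ((2 * n ^ n : ℕ) : ℝ) ≤ (((n + 1) ^ n : ℕ) : ℝ) := by push_cast; linarith
    have hf := hmono hmem1 hmem2 hle
    have e1 : C ((n + 1) ^ n) = n * C (n + 1) := hCpow (n + 1) n (by omega)
    have e2 : C (2 * n ^ n) = C 2 + n * C n := by
      rw [hCmul 2 (n ^ n) (by omega) (Nat.one_le_pow _ _ (by omega)),
        hCpow n n hn]
    have e3 : C (2 * n ^ n) ≤ C ((n + 1) ^ n) := by
      simp only [hCdef]; linarith
    rw [e1, e2] at e3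
    linarith
  set c : ℝ := C 2 with hc
  have hc0 : 0 ≤ c := by
    have h12 : ((1:ℝ)) ≤ (2:ℝ) := by norm_num
    have := hmono (Set.mem_Ioi.mpr one_pos) (Set.mem_Ioi.mpr (by norm_num : (0:ℝ) < 2)) h12
    simp only [hc, hCdef]
    norm_num
    exact this
  rcases eq_or_lt_of_le hc0 with hzero | hpos
  · -- c = 0 : f constant
    right
    have hpow0 : ∀ n : ℕ, C (2 ^ n) = 0 := by
      intro n; rw [hCpow 2 n (by omega), ← hc, ← hzero, mul_zero]
    have hdouble : ∀ n : ℕ, ∀ x : ℝ, 0 < x → f ((2 ^ n : ℕ) * x) = f x := by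
      intro n x hx
      rcases Nat.eq_zero_or_pos n with rfl | hn
      · simp
      · rw [lem1' (2 ^ n) (Nat.one_le_pow _ _ (by omega)) x hx, hpow0, add_zero]
    have key : ∀ x ∈ Set.Ioi (0:ℝ), ∀ y ∈ Set.Ioi (0:ℝ), x ≤ y → f x = f y := by
      intro x hx y hy hxy
      obtain ⟨n, hny⟩ := pow_unbounded_of_one_lt (y / x) (by norm_num : (1:ℝ) < 2)
      have hx' : (0:ℝ) < x := hx
      have hylt : y < (2 ^ n : ℕ) * x := by
        push_cast
        rw [div_lt_iff₀ hx'] at hny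
        push_cast at hny ⊢
        linarith
      have hmem : ((2 ^ n : ℕ) : ℝ) * x ∈ Set.Ioi (0:ℝ) := by
        simp only [Set.mem_Ioi]; positivity
      have h1 := hmono hx hy hxy
      have h2 := hmono hy hmem (le_of_lt hylt)
      have h3 := hdouble n x hx'
      linarith
    intro x hx y hy
    rcases le_total x y with h | h
    · exact key x hx y hy h
    · exact (key y hy x hx h).symm
  · -- c > 0 : deriv f x ≥ c / x > 0
    left
    intro x hx
    have hx' : (0:ℝ) < x := hx
    have hd := (hdiff x hx).hasDerivAt
    have hslope := hasDerivAt_iff_tendsto_slope.mp hd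
    -- sequence y n = x + x/(n+1)
    set y : ℕ → ℝ := fun n => x + x / ((n : ℝ) + 1) with hy
    have hslopeval : ∀ n : ℕ, c / x ≤ slope f x (y n) := by
      intro n
      have hn1 : (0:ℝ) < (n:ℝ) + 1 := by positivity
      have hz : (0:ℝ) < x / ((n : ℝ) + 1) := by positivity
      have e1 : f (((n + 2 : ℕ)) * (x / ((n:ℝ)+1))) = f (x / ((n:ℝ)+1)) + C (n + 2) :=
        lem1' (n + 2) (by omega) _ hz
      have e2 : f (((n + 1 : ℕ)) * (x / ((n:ℝ)+1))) = f (x / ((n:ℝ)+1)) + C (n + 1) :=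
        lem1' (n + 1) (by omega) _ hz
      have e1' : ((n + 2 : ℕ) : ℝ) * (x / ((n:ℝ)+1)) = y n := by
        simp only [hy]; push_cast; field_simp; ring
      have e2' : ((n + 1 : ℕ) : ℝ) * (x / ((n:ℝ)+1)) = x := by
        push_cast; field_simp
      rw [e1'] at e1
      rw [e2'] at e2
      have hfy : f (y n) - f x = C (n + 2) - C (n + 1) := by rw [e1, e2]; ring
      have hyx : y n - x = x / ((n:ℝ)+1) := by simp only [hy]; ring
      have hk := hkey (n + 1) (by omega)
      have hcast : ((n + 1 : ℕ) : ℝ) = (n : ℝ) + 1 := by push_cast; ring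
      rw [hcast] at hk
      rw [slope_def_field, hfy, hyx]
      have hrw : (C (n + 2) - C (n + 1)) / (x / ((n:ℝ)+1))
          = (((n:ℝ)+1) * (C (n + 2) - C (n + 1))) / x := by
        field_simp
      rw [hrw]
      have h2 : ((n:ℝ)+1) * (C (n + 1 + 1) - C (n + 1)) = ((n:ℝ)+1) * (C (n + 2) - C (n + 1)) := by
        norm_num
      have hle2 : c ≤ ((n:ℝ)+1) * (C (n + 2) - C (n + 1)) := by linarith
      gcongr
    have h0 : Filter.Tendsto (fun n : ℕ => x / ((n:ℝ)+1)) Filter.atTop (nhds 0) := by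
      have := tendsto_one_div_add_atTop_nhds_zero_nat.const_mul x
      simpa [mul_one_div, div_eq_mul_inv] using this
    have hytend : Filter.Tendsto y Filter.atTop (nhdsWithin x {x}ᶜ) := by
      apply tendsto_nhdsWithin_of_tendsto_nhds_of_eventually_within
      · simpa using Filter.Tendsto.add (tendsto_const_nhds (x := x)) h0
      · apply Filter.Eventually.of_forall
        intro n
        have hz : (0:ℝ) < x / ((n : ℝ) + 1) := by positivity
        simp only [hy, Set.mem_compl_iff, Set.mem_singleton_iff]
        intro h
        nlinarith
    have hcomp := hslope.comp hytend
    have hge : c / x ≤ deriv f x :=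
      ge_of_tendsto hcomp (Filter.Eventually.of_forall hslopeval)
    have : 0 < c / x := by positivity
    linarith
end
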